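/- arXiv:2508.18511 — 7 statements merged into one kernel-verified Lean document; each statement's English description precedes it below -/
import Mathlib

section
/- Let N>1 be an integer and let n be an integer with 0 ≤ n ≤ N and gcd(N,n) > 1. Then the point z = n/N lies on the topological boundary (frontier) of R_N as a subset of ℂ. -/
/-!
Write `z = n/N`. The rational `(nN ± 1)/N²` has denominator exactly `N²`, lies in `[0,1]` for
the right choice of sign, and is at distance `1/N²` from `z`, so `z` lies on its disk and hence
in `R_N`. On the other hand, if `N ∣ b` then the reduced denominator of `z` divides `b`, so
`|a/b - z|` is either `0` or at least `1/b`; it is not `0` because `gcd(N,n) > 1` makes that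
reduced denominator smaller than `N`. Thus `z` lies outside every open disk of `R_N`, and the
points `z + it`, `t ≠ 0`, which approach `z`, lie outside `R_N`.
-/

namespace Paper

noncomputable section

/-- Closed disk attached to a rational `α = a/b` in lowest terms:
center `α`, radius `1/b`. -/
def disk (α : ℚ) : Set ℂ := Metric.closedBall (α : ℂ) (1 / (α.den : ℝ))

/-- The closed disk `D_{a/b}` of radius `1/b` centered at `a/b`. -/
def diskAt (a b : ℕ) : Set ℂ := Metric.closedBall ((a : ℂ) / (b : ℂ)) (1 / (b : ℝ))

/-- The north pole `P_α = a/b + i/b` of the disk of `α = a/b` in lowest terms. -/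
def northPole (α : ℚ) : ℂ := (α : ℂ) + Complex.I / (α.den : ℂ)

/-- Complexity of the north pole of `α` relative to a set `S` of rationals:
the number of `β ∈ S`, `β ≠ α`, whose disk contains `P_α`. -/
def poleComplexity (S : Set ℚ) (α : ℚ) : ℕ :=
  {β ∈ S | β ≠ α ∧ northPole α ∈ disk β}.ncard

/-- Rationals `a/b ∈ [0,1]` in lowest terms with `N ∣ b`. -/
def cand (N : ℕ) : Set ℚ := {α | 0 ≤ α ∧ α ≤ 1 ∧ N ∣ α.den}

/-- The region `R_N`. -/
def RN (N : ℕ) : Set ℂ := ⋃ α ∈ cand N, disk α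

/-- The set `S_N`: those `α` whose disk is not covered by the other disks. -/
def SSet (N : ℕ) : Set ℚ :=
  {α | α ∈ cand N ∧ ¬ disk α ⊆ ⋃ β ∈ cand N \ {α}, disk β}

/-- The complexity `c(N)`: the maximum of the complexities of north poles of `α ∈ S_N`. -/
def cN (N : ℕ) : ℕ := sSup (poleComplexity (SSet N) '' SSet N)

open Complex Filter Topology

theorem one_div_den_le_abs_sub {q r : ℚ} (hne : q ≠ r) (hdvd : r.den ∣ q.den) :
    1 / (q.den : ℚ) ≤ |q - r| := by
  obtain ⟨k, hk⟩ := hdvd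
  have hscaled : (q - r) * q.den = (q.num - r.num * k : ℤ) := by
    rw [sub_mul, Rat.mul_den_eq_num, hk]
    push_cast
    rw [← mul_assoc, Rat.mul_den_eq_num]
  have hm : q.num - r.num * k ≠ 0 := by
    rintro h
    rw [h, Int.cast_zero, mul_eq_zero, sub_eq_zero] at hscaled
    exact hscaled.elim hne (by exact_mod_cast q.den_nz)
  have hone : (1 : ℚ) ≤ |(q - r) * q.den| := by
    rw [hscaled]
    exact_mod_cast Int.one_le_abs hm
  rwa [abs_mul, Nat.abs_cast, ← div_le_iff₀ (by exact_mod_cast q.den_pos)] at hone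

theorem den_natCast_div {N : ℕ} (hN : N ≠ 0) (n : ℕ) : ((n : ℚ) / N).den = N / N.gcd n := by
  rw [← Int.cast_natCast n, ← Rat.mkRat_eq_div, Rat.den_mkRat, if_neg hN, Int.natAbs_natCast]

theorem one_div_den_le_abs_sub_natCast_div {N n : ℕ} (hg : 1 < N.gcd n) {α : ℚ}
    (hα : N ∣ α.den) :
    1 / (α.den : ℚ) ≤ |α - n / N| := by
  have hN : 0 < N := Nat.pos_of_dvd_of_pos hα α.den_pos
  have hden : ((n : ℚ) / N).den = N / N.gcd n := den_natCast_div hN.ne' n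
  refine one_div_den_le_abs_sub ?_ (hden ▸ (Nat.div_dvd_of_dvd (N.gcd_dvd_left n)).trans hα)
  rintro rfl
  have := Nat.le_of_dvd (Nat.div_pos (Nat.gcd_le_left n hN) (by omega)) (hden ▸ hα)
  exact (Nat.div_lt_self hN hg).not_ge this

theorem ofReal_add_mul_I_notMem_closedBall {x c ρ : ℝ} (hρ : ρ ≤ |x - c|) {t : ℝ}
    (ht : t ≠ 0) :
    (x : ℂ) + t * I ∉ Metric.closedBall (c : ℂ) ρ := by
  rw [Metric.mem_closedBall, dist_eq, not_le]
  refine hρ.trans_lt ?_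
  have := (abs_re_lt_norm (z := (x : ℂ) + t * I - c)).2 (by simpa using ht)
  simpa using this

theorem natCast_div_add_mul_I_notMem_RN {N n : ℕ} (hg : 1 < N.gcd n) {t : ℝ} (ht : t ≠ 0) :
    (n : ℂ) / N + t * I ∉ RN N := by
  simp only [RN, disk, Set.mem_iUnion, not_exists]
  intro α hα
  have hgap := (Rat.cast_le (K := ℝ)).2 (one_div_den_le_abs_sub_natCast_div hg hα.2.2)
  have hz : (n : ℂ) / N = ((n / N : ℚ) : ℝ) := by push_cast; rfl
  rw [hz, ← ofReal_ratCast]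
  refine ofReal_add_mul_I_notMem_closedBall ?_ ht
  rw [abs_sub_comm]
  push_cast at hgap ⊢
  exact hgap

theorem den_mkRat_mul_add_unit {N : ℕ} (hN : N ≠ 0) (m : ℤ) {s : ℤ} (hs : IsUnit s) :
    (mkRat (m * N + s) (N ^ 2)).den = N ^ 2 := by
  have hcop : IsCoprime ((N : ℤ) ^ 2) (s + N * m) :=
    (IsCoprime.add_mul_left_right ⟨0, s, by simp [Int.isUnit_mul_self hs]⟩ m).pow_left
  rw [Int.isCoprime_iff_gcd_eq_one, Int.gcd_eq_natAbs, Int.natAbs_pow, Int.natAbs_natCast] at hcop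
  rw [Rat.den_mkRat, if_neg (pow_ne_zero 2 hN), add_comm, mul_comm, hcop, Nat.div_one]

theorem natCast_div_mem_RN {N n : ℕ} (hN : 0 < N) (hn : n ≤ N) : (n : ℂ) / N ∈ RN N := by
  obtain ⟨s, hs, hlo, hhi⟩ :
      ∃ s : ℤ, IsUnit s ∧ 0 ≤ n * N + s ∧ n * N + s ≤ N ^ 2 := by
    rcases hn.lt_or_eq with h | rfl
    · exact ⟨1, isUnit_one, by positivity, by nlinarith⟩
    · exact ⟨-1, isUnit_one.neg, by nlinarith, by nlinarith⟩
  set α := mkRat (n * N + s) (N ^ 2) with hα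
  have hden : α.den = N ^ 2 := den_mkRat_mul_add_unit hN.ne' n hs
  have hNq : (0 : ℚ) < N ^ 2 := by positivity
  rw [Rat.mkRat_eq_div] at hα
  refine Set.mem_biUnion (x := α) ⟨?_, ?_, hden ▸ dvd_pow_self N two_ne_zero⟩ ?_
  · rw [hα]; push_cast
    exact div_nonneg (by exact_mod_cast hlo) hNq.le
  · rw [hα, div_le_one (by exact_mod_cast hNq)]
    exact_mod_cast hhi
  · rw [disk, Metric.mem_closedBall, hden, hα, dist_eq]
    have hdiff :
        (n : ℂ) / N - (((n * N + s : ℤ) : ℚ) / ((N ^ 2 : ℕ) : ℚ) : ℚ) = -(s / N ^ 2) := by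
      push_cast; field_simp; ring
    rw [hdiff, norm_neg, norm_div, norm_pow, Complex.norm_natCast, Complex.norm_intCast,
      ← Int.cast_abs, Int.isUnit_iff_abs_eq.1 hs]
    push_cast; rfl

/-- For `0 ≤ n ≤ N` with `gcd(N,n) > 1`, the point `n/N` lies on the
topological boundary of `R_N`. -/
theorem mem_frontier_of_gcd_gt_one (N n : ℕ) (hN : 1 < N) (hn : n ≤ N)
    (hg : 1 < Nat.gcd N n) :
    ((n : ℂ) / (N : ℂ)) ∈ frontier (RN N) := by
  rw [frontier_eq_closure_inter_closure]
  refine ⟨subset_closure (natCast_div_mem_RN (zero_lt_one.trans hN) hn), ?_⟩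
  have hlim :
      Tendsto (fun t : ℝ ↦ (n : ℂ) / N + t * I) (𝓝[≠] 0) (𝓝 ((n : ℂ) / N)) :=
    ((continuous_const.add (continuous_ofReal.mul continuous_const)).tendsto' 0 _
      (by simp)).mono_left nhdsWithin_le_nhds
  exact mem_closure_of_tendsto hlim
    (eventually_nhdsWithin_of_forall fun _ ht ↦ natCast_div_add_mul_I_notMem_RN hg ht)

end

end Paper
end

section
/- Let (N,n) be a good pair, i.e., integers with N>1, 0 ≤ n ≤ N−1, gcd(N,n) > 1 and gcd(N,n+1) = 1, and let n' be the least integer greater than n with gcd(N,n') > 1. Then R_{N,n} = ⋃_{n < a < n'} D_{a/N}, where the union is over integers a with n < a < n'. In particular, c(N,n) = 0. -/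
namespace Paper

noncomputable section

/-- The least integer `n' > n` with `gcd(N,n') > 1`. -/
def nxt (N n : ℕ) : ℕ := sInf {m | n < m ∧ 1 < Nat.gcd N m}

/-- Rationals `a/b ∈ [n/N, n'/N]` in lowest terms with `N ∣ b`. -/
def candP (N n : ℕ) : Set ℚ :=
  {α | (n : ℚ) / (N : ℚ) ≤ α ∧ α ≤ (nxt N n : ℚ) / (N : ℚ) ∧ N ∣ α.den}

/-- The region `R_{N,n}` for a pair `(N,n)`. -/
def RP (N n : ℕ) : Set ℂ := ⋃ α ∈ candP N n, disk α

/-- The set `S_{N,n}` for a pair `(N,n)`. -/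
def SP (N n : ℕ) : Set ℚ :=
  {α | α ∈ candP N n ∧ ¬ disk α ⊆ ⋃ β ∈ candP N n \ {α}, disk β}

/-- The complexity `c(N,n)` for a pair `(N,n)`. -/
def cP (N n : ℕ) : ℕ := sSup (poleComplexity (SP N n) '' SP N n)
/-!
An admissible `α = a/(kN)` lies strictly between `n/N` and `n'/N`, since both endpoints have
`gcd > 1` with `N` and so are not of the form `c/N` in lowest terms. Then `Nα = a/k` is within
`1 - 1/k` of an integer `c` with `n < c < n'` (the floor of `a/k`, or `n + 1` when that floor is
`n`; here `n' ≥ n + 2` because the pair is good), and this distance bound is exactly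
`D_α ⊆ D_{c/N}`. So only the disks `D_{c/N}` matter; they all have radius `1/N`, so none of them
contains the north pole of another.
-/

lemma lt_nxt_and_one_lt_gcd {N : ℕ} (n : ℕ) (hN : 1 < N) :
    n < nxt N n ∧ 1 < N.gcd (nxt N n) :=
  Nat.sInf_mem (s := {m | n < m ∧ 1 < N.gcd m})
    ⟨N * (n + 1), by nlinarith, by rwa [Nat.gcd_mul_right_right]⟩

lemma gcd_eq_one_of_lt_nxt {N n m : ℕ} (h₁ : n < m) (h₂ : m < nxt N n) : N.gcd m = 1 := by
  have hm : ¬(n < m ∧ 1 < N.gcd m) := Nat.notMem_of_lt_sInf h₂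
  have hpos : 0 < N.gcd m := Nat.gcd_pos_of_pos_right N (by omega)
  omega

lemma add_two_le_nxt {N n : ℕ} (hN : 1 < N) (hgood : N.gcd (n + 1) = 1) : n + 2 ≤ nxt N n := by
  obtain ⟨hlt, hgcd⟩ := lt_nxt_and_one_lt_gcd n hN
  have : nxt N n ≠ n + 1 := fun h => by rw [h, hgood] at hgcd; omega
  omega

lemma den_natCast_div_s4 (m N : ℕ) : ((m : ℚ) / N).den = if N = 0 then 1 else N / N.gcd m := by
  have h := Rat.mkRat_eq_div m N
  rw [Int.cast_natCast] at h
  rw [← h, Rat.den_mkRat]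
  simp

lemma coprime_of_dvd_den_div {N m : ℕ} (h : N ∣ ((m : ℚ) / N).den) : N.Coprime m := by
  rw [den_natCast_div_s4] at h
  split_ifs at h with hN
  · simp [hN] at h
  · have hle : N / N.gcd m ≤ N := Nat.div_le_self _ _
    have hpos : 0 < N / N.gcd m :=
      Nat.div_pos (Nat.gcd_le_left m (by omega)) (Nat.gcd_pos_of_pos_left m (by omega))
    have heq : N / N.gcd m = N := le_antisymm hle (Nat.le_of_dvd hpos h)
    simpa [Nat.div_eq_self, hN] using heq

lemma num_den_natCast_div_of_coprime {N c : ℕ} (hN : 0 < N) (h : N.Coprime c) :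
    ((c : ℚ) / N).num = c ∧ ((c : ℚ) / N).den = N := by
  have hN' : (0 : ℤ) < N := by exact_mod_cast hN
  have hcop : Nat.Coprime (c : ℤ).natAbs (N : ℤ).natAbs := by simpa using h.symm
  have hnum := Rat.num_div_eq_of_coprime hN' hcop
  have hden := Rat.den_div_eq_of_coprime hN' hcop
  push_cast at hnum hden
  exact ⟨hnum, by exact_mod_cast hden⟩

lemma exists_lt_lt_abs_sub_mul_le {a k n n' : ℤ} (hk : 0 < k) (hn' : n + 2 ≤ n')
    (h₁ : n * k < a) (h₂ : a < n' * k) : ∃ c, n < c ∧ c < n' ∧ |a - c * k| ≤ k - 1 := by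
  have hdiv := Int.emod_add_mul_ediv a k
  have hr₀ := Int.emod_nonneg a hk.ne'
  have hrk := Int.emod_lt_of_pos a hk
  set q := a / k
  set r := a % k
  have hnq : n ≤ q := by nlinarith
  have hqn' : q < n' := by nlinarith
  rcases hnq.lt_or_eq with hlt | rfl
  · exact ⟨q, hlt, hqn', abs_le.2 ⟨by linarith, by linarith⟩⟩
  · exact ⟨q + 1, by omega, by omega, abs_le.2 ⟨by linarith, by linarith⟩⟩

lemma div_mem_candP {N n c : ℕ} (hN : 0 < N) (h₁ : n < c) (h₂ : c < nxt N n) :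
    (c : ℚ) / N ∈ candP N n := by
  have hden := (num_den_natCast_div_of_coprime hN (gcd_eq_one_of_lt_nxt h₁ h₂)).2
  refine ⟨?_, ?_, by rw [hden]⟩ <;> gcongr

lemma lt_and_lt_of_mem_candP {N n : ℕ} {α : ℚ} (hN : 1 < N) (hg : 1 < N.gcd n)
    (hα : α ∈ candP N n) : (n : ℚ) / N < α ∧ α < (nxt N n : ℚ) / N := by
  obtain ⟨hlo, hhi, hdvd⟩ := hα
  have hne : ∀ m : ℕ, 1 < N.gcd m → α ≠ (m : ℚ) / N := by
    rintro m hm rfl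
    have := (coprime_of_dvd_den_div hdvd).gcd_eq_one
    omega
  exact ⟨hlo.lt_of_ne (hne n hg).symm, hhi.lt_of_ne (hne _ (lt_nxt_and_one_lt_gcd n hN).2)⟩

lemma disk_subset_disk {α β : ℚ} {k : ℕ} (hden : α.den = β.den * k)
    (h : |α.num - β.num * k| ≤ k - 1) : disk α ⊆ disk β := by
  have hk : (0 : ℝ) < k := by
    have := α.den_pos
    rw [hden] at this
    exact_mod_cast Nat.pos_of_mul_pos_left this
  have hd : (0 : ℝ) < β.den := by exact_mod_cast β.den_pos
  have hsub : (α : ℝ) - β = ((α.num - β.num * k : ℤ) : ℝ) / (β.den * k) := by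
    rw [Rat.cast_def, Rat.cast_def, hden]
    push_cast
    field_simp
  have hnum : |((α.num - β.num * k : ℤ) : ℝ)| ≤ k - 1 := by exact_mod_cast h
  refine Metric.closedBall_subset_closedBall' ?_
  rw [Complex.dist_eq, ← Rat.cast_sub, Complex.norm_ratCast, Rat.cast_sub, hsub, abs_div,
    abs_of_pos (show (0 : ℝ) < β.den * k by positivity), hden]
  calc 1 / ((β.den * k : ℕ) : ℝ) + |((α.num - β.num * k : ℤ) : ℝ)| / (β.den * k)
      ≤ 1 / (β.den * k) + (k - 1) / (β.den * k) := by push_cast at hnum ⊢; gcongr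
    _ = 1 / β.den := by field_simp; ring

lemma exists_disk_subset_of_mem_candP {N n : ℕ} {α : ℚ} (hN : 1 < N) (hg : 1 < N.gcd n)
    (hgood : N.gcd (n + 1) = 1) (hα : α ∈ candP N n) :
    ∃ c ∈ Set.Ioo n (nxt N n), disk α ⊆ disk ((c : ℚ) / N) := by
  obtain ⟨k, hk⟩ := hα.2.2
  obtain ⟨hlo, hhi⟩ := lt_and_lt_of_mem_candP hN hg hα
  have hk₀ : 0 < k := Nat.pos_of_mul_pos_left (hk ▸ α.den_pos)
  have hN₀ : (0 : ℚ) < N := Nat.cast_pos.2 (by omega)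
  have hNk : (0 : ℚ) < N * k := by positivity
  have hα_eq : α = α.num / (N * k) := by rw [← Nat.cast_mul, ← hk, Rat.num_div_den]
  rw [hα_eq, div_lt_div_iff₀ hN₀ hNk] at hlo
  rw [hα_eq, div_lt_div_iff₀ hNk hN₀] at hhi
  obtain ⟨c, hc₁, hc₂, hc⟩ :=
    exists_lt_lt_abs_sub_mul_le (a := α.num) (k := k) (n := n) (n' := nxt N n)
    (by exact_mod_cast hk₀)
    (by exact_mod_cast add_two_le_nxt hN hgood)
    (by exact_mod_cast (show (n : ℚ) * k < α.num by nlinarith))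
    (by exact_mod_cast (show (α.num : ℚ) < nxt N n * k by nlinarith))
  lift c to ℕ using by omega
  have hc₁' : n < c := by exact_mod_cast hc₁
  have hc₂' : c < nxt N n := by exact_mod_cast hc₂
  obtain ⟨hnum, hden⟩ :=
    num_den_natCast_div_of_coprime (by omega) (gcd_eq_one_of_lt_nxt hc₁' hc₂')
  exact ⟨c, ⟨hc₁', hc₂'⟩, disk_subset_disk (by rw [hden, hk]) (by rwa [hnum])⟩

lemma northPole_notMem_disk {α β : ℚ} (hden : α.den = β.den) (hne : α ≠ β) :
    northPole α ∉ disk β := by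
  have hre : (northPole α - β).re ≠ 0 := by
    simpa [northPole, Complex.div_re, sub_eq_zero] using hne
  have him : (northPole α - β).im = 1 / β.den := by
    simp [northPole, Complex.div_im, hden]
  have hlt := Complex.abs_im_lt_norm.2 hre
  rw [him, abs_of_pos (by positivity)] at hlt
  rwa [disk, Metric.mem_closedBall, Complex.dist_eq, not_le]

lemma poleComplexity_eq_zero {S : Set ℚ} {α : ℚ} (h : ∀ β ∈ S, β.den = α.den) :
    poleComplexity S α = 0 := by
  rw [poleComplexity, ← Set.ncard_empty ℚ]
  congr 1
  refine Set.eq_empty_iff_forall_notMem.2 fun β ⟨hβ, hne, hpole⟩ => ?_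
  exact northPole_notMem_disk (h β hβ).symm hne.symm hpole

lemma den_eq_of_mem_SP {N n : ℕ} {α : ℚ} (hN : 1 < N) (hg : 1 < N.gcd n)
    (hgood : N.gcd (n + 1) = 1) (hα : α ∈ SP N n) : α.den = N := by
  obtain ⟨c, ⟨hc₁, hc₂⟩, hsub⟩ := exists_disk_subset_of_mem_candP hN hg hgood hα.1
  have hden := (num_den_natCast_div_of_coprime (by omega) (gcd_eq_one_of_lt_nxt hc₁ hc₂)).2
  by_contra hne
  have hother : (c : ℚ) / N ∈ candP N n \ {α} :=
    ⟨div_mem_candP (by omega) hc₁ hc₂,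
      fun h => hne (by rw [← Set.mem_singleton_iff.1 h, hden])⟩
  exact hα.2 (hsub.trans (Set.subset_biUnion_of_mem (u := disk) hother))

theorem good_region_general (N n : ℕ) (hN : 1 < N) (hg : 1 < Nat.gcd N n)
    (hgood : Nat.gcd N (n + 1) = 1) :
    RP N n = (⋃ a ∈ Set.Ioo n (nxt N n), disk ((a : ℚ) / (N : ℚ))) ∧ cP N n = 0 := by
  refine ⟨Set.Subset.antisymm ?_ ?_, ?_⟩
  · refine Set.iUnion₂_subset fun α hα => ?_
    obtain ⟨c, hc, hsub⟩ := exists_disk_subset_of_mem_candP hN hg hgood hα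
    exact hsub.trans (Set.subset_biUnion_of_mem (u := fun a : ℕ => disk ((a : ℚ) / N)) hc)
  · exact Set.iUnion₂_subset fun c hc =>
      Set.subset_biUnion_of_mem (u := disk) (div_mem_candP (by omega) hc.1 hc.2)
  · refine Nat.eq_zero_of_le_zero (csSup_le' ?_)
    rintro _ ⟨α, hα, rfl⟩
    refine (poleComplexity_eq_zero fun β hβ => ?_).le
    rw [den_eq_of_mem_SP hN hg hgood hβ, den_eq_of_mem_SP hN hg hgood hα]

/-- For a good pair `(N,n)` (i.e. `gcd(N,n) > 1` and `gcd(N,n+1) = 1`), the region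
`R_{N,n}` is the union of the disks `D_{a/N}` over integers `n < a < n'`.
In particular `c(N,n) = 0`. -/
theorem good_region (N n : ℕ) (hN : 1 < N) (hn : n ≤ N - 1) (hg : 1 < Nat.gcd N n)
    (hgood : Nat.gcd N (n + 1) = 1) :
    RP N n = (⋃ a ∈ Set.Ioo n (nxt N n), disk ((a : ℚ) / (N : ℚ))) ∧ cP N n = 0 :=
  good_region_general N n hN hg hgood

end

end Paper
end

section
/- Let (N,n) be a bad pair. Then (N, N−n−1) is also a bad pair, the regions R_{N,n} and R_{N,N−n−1} are mirror images of each other under the reflection z ↦ 1 − conj(z) across the vertical line Re(z) = 1/2, and c(N,n) = c(N,N−n−1). -/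
namespace Paper

noncomputable section

/-- Rationals `a/b ∈ [n/N, (n+1)/N]` in lowest terms with `N ∣ b`. -/
def candB (N n : ℕ) : Set ℚ :=
  {α | (n : ℚ) / (N : ℚ) ≤ α ∧ α ≤ ((n : ℚ) + 1) / (N : ℚ) ∧ N ∣ α.den}

/-- The region `R_{N,n}` for a bad pair `(N,n)`. -/
def RB (N n : ℕ) : Set ℂ := ⋃ α ∈ candB N n, disk α

/-- The set `S_{N,n}` for a bad pair `(N,n)`. -/
def SB (N n : ℕ) : Set ℚ :=
  {α | α ∈ candB N n ∧ ¬ disk α ⊆ ⋃ β ∈ candB N n \ {α}, disk β}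

/-- The complexity `c(N,n)` for a bad pair `(N,n)`. -/
def cB (N n : ℕ) : ℕ := sSup (poleComplexity (SB N n) '' SB N n)

/-! The reflection `z ↦ 1 - conj z` is an isometry sending `α` to `1 - α`, and `1 - α` has the
same denominator as `α`; hence it maps `D_α` onto `D_{1-α}` and `P_α` to `P_{1-α}`. Since
`α ↦ 1 - α` maps the candidates of `[n/N, (n+1)/N]` bijectively onto those of
`[(N-n-1)/N, (N-n)/N]`, every object built from candidates, disks and poles is carried over.
Badness of `(N, N-n-1)` is `gcd(N, N-k) = gcd(N, k)`. -/

theorem _root_.Function.Involutive.eq_image_of_forall_mem_iff {α : Type*} {f : α → α}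
    (hf : Function.Involutive f) {s t : Set α} (h : ∀ a, f a ∈ t ↔ a ∈ s) : t = f '' s := by
  ext a
  rw [hf.image_eq_preimage_symm, Set.mem_preimage, ← h, hf]

lemma one_sub_involutive : Function.Involutive (fun q : ℚ => 1 - q) := sub_sub_cancel 1

lemma den_one_sub (q : ℚ) : (1 - q).den = q.den := by
  exact_mod_cast Rat.natCast_sub_den 1 q

def mirror : ℂ ≃ᵢ ℂ := Complex.conjLIE.toIsometryEquiv.trans (IsometryEquiv.subLeft 1)

lemma mirror_apply (z : ℂ) : mirror z = 1 - starRingEnd ℂ z := rfl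

lemma mirror_ratCast (q : ℚ) : mirror q = ((1 - q : ℚ) : ℂ) := by
  rw [mirror_apply, map_ratCast]
  push_cast
  rfl

lemma disk_one_sub (α : ℚ) : disk (1 - α) = mirror '' disk α := by
  rw [disk, disk, mirror.image_closedBall, den_one_sub, mirror_ratCast]

lemma mirror_mem_disk_one_sub {z : ℂ} {α : ℚ} : mirror z ∈ disk (1 - α) ↔ z ∈ disk α := by
  rw [disk_one_sub]
  exact mirror.injective.mem_set_image

lemma northPole_one_sub (α : ℚ) : northPole (1 - α) = mirror (northPole α) := by
  rw [northPole, northPole, den_one_sub, mirror_apply, map_add, map_ratCast, map_div₀,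
    Complex.conj_I, map_natCast]
  push_cast
  ring

lemma biUnion_disk_image_one_sub (s : Set ℚ) :
    ⋃ β ∈ (1 - ·) '' s, disk β = mirror '' ⋃ α ∈ s, disk α := by
  rw [Set.biUnion_image, Set.image_iUnion₂]
  exact Set.iUnion₂_congr fun α _ => disk_one_sub α

lemma poleComplexity_image_one_sub (s : Set ℚ) (α : ℚ) :
    poleComplexity ((1 - ·) '' s) (1 - α) = poleComplexity s α := by
  have hset : {β ∈ (1 - ·) '' s | β ≠ 1 - α ∧ northPole (1 - α) ∈ disk β}
      = (1 - ·) '' {β ∈ s | β ≠ α ∧ northPole α ∈ disk β} := by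
    refine one_sub_involutive.eq_image_of_forall_mem_iff fun γ => ?_
    simp only [Set.mem_ofPred_eq, one_sub_involutive.injective.mem_set_image,
      one_sub_involutive.injective.ne_iff, northPole_one_sub, mirror_mem_disk_one_sub]
  rw [poleComplexity, poleComplexity, hset,
    Set.ncard_image_of_injective _ one_sub_involutive.injective]

section Symmetry

variable {N m n : ℕ}

lemma one_sub_mem_candB (h : m + n + 1 = N) {α : ℚ} :
    1 - α ∈ candB N m ↔ α ∈ candB N n := by
  have hN : (N : ℚ) ≠ 0 := by norm_cast; omega
  have hNmn : (N : ℚ) = m + n + 1 := by exact_mod_cast h.symm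
  have hlow : (m : ℚ) / N = 1 - (n + 1) / N := by field_simp; linarith
  have hhigh : ((m : ℚ) + 1) / N = 1 - n / N := by field_simp; linarith
  simp only [candB, Set.mem_ofPred_eq, den_one_sub, hlow, hhigh]
  constructor <;> rintro ⟨h₁, h₂, h₃⟩ <;> exact ⟨by linarith, by linarith, h₃⟩

lemma candB_eq_image_one_sub (h : m + n + 1 = N) : candB N m = (1 - ·) '' candB N n :=
  one_sub_involutive.eq_image_of_forall_mem_iff fun _ => one_sub_mem_candB h

lemma one_sub_mem_SB (h : m + n + 1 = N) {α : ℚ} : 1 - α ∈ SB N m ↔ α ∈ SB N n := by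
  have hdiff : candB N m \ {1 - α} = (1 - ·) '' (candB N n \ {α}) := by
    rw [candB_eq_image_one_sub h, Set.image_sdiff one_sub_involutive.injective,
      Set.image_singleton]
  simp only [SB, Set.mem_ofPred_eq, one_sub_mem_candB h, hdiff, biUnion_disk_image_one_sub,
    disk_one_sub, Set.image_subset_image_iff mirror.injective]

lemma SB_eq_image_one_sub (h : m + n + 1 = N) : SB N m = (1 - ·) '' SB N n :=
  one_sub_involutive.eq_image_of_forall_mem_iff fun _ => one_sub_mem_SB h

lemma RB_eq_image_mirror (h : m + n + 1 = N) : RB N m = mirror '' RB N n := by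
  rw [RB, RB, candB_eq_image_one_sub h, biUnion_disk_image_one_sub]

lemma cB_eq (h : m + n + 1 = N) : cB N m = cB N n := by
  rw [cB, cB, SB_eq_image_one_sub h, Set.image_image]
  simp only [poleComplexity_image_one_sub]

end Symmetry

/-- For a bad pair `(N,n)`, the pair `(N, N-n-1)` is also bad, the regions
`R_{N,n}` and `R_{N,N-n-1}` are mirror images under `z ↦ 1 - conj z`, and
`c(N,n) = c(N,N-n-1)`. -/
theorem symmetric_bad_pair (N n : ℕ) (hN : 1 < N) (hn : n ≤ N - 1)
    (hg : 1 < Nat.gcd N n) (hbad : 1 < Nat.gcd N (n + 1)) :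
    (N - n - 1 ≤ N - 1 ∧ 1 < Nat.gcd N (N - n - 1) ∧ 1 < Nat.gcd N (N - n - 1 + 1)) ∧
    RB N (N - n - 1) = (fun z : ℂ => 1 - (starRingEnd ℂ) z) '' RB N n ∧
    cB N n = cB N (N - n - 1) := by
  have hsum : (N - n - 1) + n + 1 = N := by omega
  refine ⟨⟨by omega, ?_, ?_⟩, RB_eq_image_mirror hsum, (cB_eq hsum).symm⟩
  · rwa [show N - n - 1 = N - (n + 1) by omega, Nat.gcd_self_sub_right (by omega)]
  · rwa [show N - n - 1 + 1 = N - n by omega, Nat.gcd_self_sub_right (by omega)]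

end

end Paper
end

section
/- Let N>1 be an integer. If for every integer n with 0 ≤ n ≤ N−1 at least one of n, n+1, 2n+1 is coprime to N, then c(N) = 0. In particular, if N has at most two distinct prime factors (ω(N) ≤ 2), then c(N) = 0. -/
namespace Paper

noncomputable section

/-!
Write `α = a/b` and `β = c/d`, and put `K = ad - bc`. If `β ≠ α` and `P_α ∈ D_β`, then
`K² + d² ≤ b²` with `N` dividing `K ≠ 0`, `d` and `b`; hence `b ≥ 2N`, and `b = 2N` forces
`|K| = d = N`, in which case `D_α ⊆ D_β`. If instead `b > 2N`, the fractional part of `Nα`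
has denominator `b/N ≠ 1`, so it lies in `[N/b, 1 - N/b]`, and then `D_α` lies inside each of
the disks of `n/N`, `(n+1)/N` and `(2n+1)/(2N)`, where `n = ⌊Nα⌋`; the coprimality hypothesis
makes one of these fractions a reduced candidate. Either way `α ∉ S_N`, so no north pole of a
point of `S_N` lies in another disk of `S_N`. Finally `n`, `n+1` and `2n+1` are pairwise
coprime, so they cannot all share a prime factor with `N` when `ω(N) ≤ 2`.
-/

def CoprimeCondition (N : ℕ) : Prop :=
  ∀ n, n ≤ N - 1 → Nat.gcd N n = 1 ∨ Nat.gcd N (n + 1) = 1 ∨ Nat.gcd N (2 * n + 1) = 1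

theorem Rat.one_div_den_le_of_pos {r : ℚ} (h : 0 < r) : 1 / r.den ≤ r := by
  conv_rhs => rw [← Rat.num_div_den r]
  gcongr
  exact_mod_cast Rat.num_pos.mpr h

theorem Rat.le_one_sub_one_div_den_of_lt_one {r : ℚ} (h : r < 1) : r ≤ 1 - 1 / r.den := by
  have hnum : r.num + 1 ≤ r.den := Rat.num_lt_denom_iff.mpr h
  have hden : (0 : ℚ) < r.den := mod_cast r.den_pos
  conv_lhs => rw [← Rat.num_div_den r]
  rw [le_sub_iff_add_le, ← add_div, div_le_one hden]
  exact_mod_cast hnum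

theorem Rat.fract_mem_Icc_of_den_ne_one {q : ℚ} (hq : q.den ≠ 1) :
    Int.fract q ∈ Set.Icc (1 / q.den : ℚ) (1 - 1 / q.den) := by
  have hpos : 0 < Int.fract q := by
    refine (Int.fract_nonneg q).lt_of_ne' fun h => hq ?_
    obtain ⟨z, rfl⟩ := Int.fract_eq_zero_iff.mp h
    exact Rat.den_intCast z
  rw [← Rat.den_intFract]
  exact ⟨Rat.one_div_den_le_of_pos hpos,
    Rat.le_one_sub_one_div_den_of_lt_one (Int.fract_lt_one q)⟩

theorem Rat.den_intCast_div_natCast {a : ℤ} {m : ℕ} (h : a.natAbs.Coprime m) (hm : 0 < m) :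
    ((a : ℚ) / m).den = m := by
  have := Rat.den_div_eq_of_coprime (a := a) (b := m) (by exact_mod_cast hm) (by simpa using h)
  exact_mod_cast this

theorem Rat.den_natCast_mul_of_dvd {q : ℚ} {N : ℕ} (h : N ∣ q.den) :
    ((N : ℚ) * q).den = q.den / N := by
  obtain ⟨m, hm⟩ := h
  have hN : 0 < N := Nat.pos_of_ne_zero (by rintro rfl; simp at hm)
  have hm0 : 0 < m := Nat.pos_of_ne_zero (by rintro rfl; simp at hm)
  have hq : (N : ℚ) * q = q.num / m := by
    conv_lhs => rw [← Rat.num_div_den q]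
    rw [hm]; push_cast; field_simp
  rw [hq, Rat.den_intCast_div_natCast _ hm0, hm, Nat.mul_div_cancel_left _ hN]
  exact q.reduced.coprime_dvd_right (Dvd.intro_left N hm.symm)

theorem Rat.den_natCast_div_natCast {c M : ℕ} (h : c.Coprime M) (hM : 0 < M) :
    ((c : ℚ) / M).den = M := by
  simpa using Rat.den_intCast_div_natCast (a := c) h hM

theorem Rat.sub_eq_div_den_mul_den (α β : ℚ) :
    α - β = ((α.num * β.den - β.num * α.den : ℤ) : ℚ) / (α.den * β.den) := by
  conv_lhs => rw [← Rat.num_div_den α, ← Rat.num_div_den β]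
  rw [div_sub_div _ _ (by positivity) (by positivity)]
  push_cast; ring

theorem two_mul_le_of_sq_add_sq_le {N k d b : ℕ} (hk : N ∣ k) (hd : N ∣ d) (hb : N ∣ b)
    (hk0 : k ≠ 0) (hd0 : d ≠ 0) (h : k ^ 2 + d ^ 2 ≤ b ^ 2) :
    2 * N ≤ b ∧ (b = 2 * N → k = N ∧ d = N) := by
  obtain ⟨k, rfl⟩ := hk
  obtain ⟨d, rfl⟩ := hd
  obtain ⟨b, rfl⟩ := hb
  have hN : 0 < N := Nat.pos_of_ne_zero (by rintro rfl; simp at hk0)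
  have hk1 : 1 ≤ k := Nat.pos_of_ne_zero (by rintro rfl; simp at hk0)
  have hd1 : 1 ≤ d := Nat.pos_of_ne_zero (by rintro rfl; simp at hd0)
  have h' : k ^ 2 + d ^ 2 ≤ b ^ 2 := by
    rw [mul_pow, mul_pow, mul_pow, ← mul_add] at h
    exact le_of_mul_le_mul_left h (by positivity)
  have hb2 : 2 ≤ b := by nlinarith
  refine ⟨by nlinarith, fun hb => ?_⟩
  obtain rfl : b = 2 := by nlinarith
  obtain rfl : k = 1 := by nlinarith
  obtain rfl : d = 1 := by nlinarith
  simp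

theorem coprimeCondition_of_card_primeFactors_le_two {N : ℕ} (hN : N ≠ 0)
    (hω : N.primeFactors.card ≤ 2) : CoprimeCondition N := by
  intro n _
  by_contra! h
  obtain ⟨p, hp, hpN, hpn⟩ := Nat.Prime.not_coprime_iff_dvd.mp h.1
  obtain ⟨q, hq, hqN, hqn⟩ := Nat.Prime.not_coprime_iff_dvd.mp h.2.1
  obtain ⟨r, hr, hrN, hrn⟩ := Nat.Prime.not_coprime_iff_dvd.mp h.2.2
  have hne {p a b : ℕ} (hp : p.Prime) (hab : a.Coprime b) (ha : p ∣ a) (hb : p ∣ b) : False :=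
    hp.one_lt.ne' (Nat.eq_one_of_dvd_coprimes hab ha hb)
  have hsub : {p, q, r} ⊆ N.primeFactors := by
    simp [Finset.insert_subset_iff, Nat.mem_primeFactors, *]
  have hcard : ({p, q, r} : Finset ℕ).card = 3 := by
    refine Finset.card_eq_three.mpr ⟨p, q, r, ?_, ?_, ?_, rfl⟩
    · rintro rfl; exact hne hp (by simp) hpn hqn
    · rintro rfl; exact hne hp (by simp) hpn hrn
    · rintro rfl; exact hne hq (by rw [two_mul, add_assoc]; simp) hqn hrn
  have := Finset.card_le_card hsub
  omega

theorem northPole_mem_disk_iff {α β : ℚ} :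
    northPole α ∈ disk β ↔ (α - β) ^ 2 + (1 / α.den) ^ 2 ≤ ((1 / β.den) ^ 2 : ℚ) := by
  rw [disk, northPole, Metric.mem_closedBall, Complex.dist_eq_re_im,
    Real.sqrt_le_iff, ← Rat.cast_le (K := ℝ)]
  simp

theorem disk_subset_disk_s8 {α γ : ℚ} (h : 1 / α.den + |α - γ| ≤ (1 / γ.den : ℚ)) :
    disk α ⊆ disk γ := by
  refine Metric.closedBall_subset_closedBall' ?_
  rw [Complex.dist_of_im_eq (by simp)]
  simpa [Real.dist_eq] using Rat.cast_le (K := ℝ) |>.mpr h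

theorem notMem_SSet_of_disk_subset {N : ℕ} {α γ : ℚ} (hγ : γ ∈ cand N) (hne : γ ≠ α)
    (h : disk α ⊆ disk γ) : α ∉ SSet N :=
  fun hα => hα.2 (h.trans (Set.subset_biUnion_of_mem (u := disk) ⟨hγ, hne⟩))

theorem disk_subset_disk_of_scaled {α γ : ℚ} {N : ℕ} (hN : 0 < N)
    (h : N / α.den + |N * α - N * γ| ≤ (N / γ.den : ℚ)) : disk α ⊆ disk γ := by
  refine disk_subset_disk_s8 ?_
  have hN' : (0 : ℚ) < N := mod_cast hN
  rw [← mul_sub, abs_mul, abs_of_pos hN', ← mul_one_div, ← mul_one_div (N : ℚ), ← mul_add]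
    at h
  exact le_of_mul_le_mul_left h hN'

theorem two_mul_le_den_of_northPole_mem_disk {N : ℕ} {α β : ℚ} (hα : N ∣ α.den)
    (hβ : N ∣ β.den) (hne : β ≠ α) (h : northPole α ∈ disk β) :
    2 * N ≤ α.den ∧ (α.den = 2 * N → disk α ⊆ disk β) := by
  set K : ℤ := α.num * β.den - β.num * α.den
  have hsub : α - β = K / (α.den * β.den) := Rat.sub_eq_div_den_mul_den α β
  have hK0 : K ≠ 0 := by
    rintro hK
    rw [hK, Int.cast_zero, zero_div, sub_eq_zero] at hsub
    exact hne hsub.symm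
  have hNK : (N : ℤ) ∣ K :=
    dvd_sub (dvd_mul_of_dvd_right (mod_cast hβ) _) (dvd_mul_of_dvd_right (mod_cast hα) _)
  have hsq : K.natAbs ^ 2 + β.den ^ 2 ≤ α.den ^ 2 := by
    have h := northPole_mem_disk_iff.mp h
    rw [hsub] at h
    field_simp at h
    zify; rw [sq_abs]; exact_mod_cast h
  obtain ⟨h2N, hcase⟩ := two_mul_le_of_sq_add_sq_le (Int.natCast_dvd.mp hNK) hβ hα
    (Int.natAbs_ne_zero.mpr hK0) β.den_nz hsq
  refine ⟨h2N, fun hb => ?_⟩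
  obtain ⟨hk, hd⟩ := hcase hb
  have hN : (0 : ℚ) < N := by exact_mod_cast (show 0 < N by omega)
  refine disk_subset_disk_s8 ?_
  rw [hsub, abs_div, ← Int.cast_abs, Int.abs_eq_natAbs, hk, hb, hd]
  push_cast
  rw [abs_of_pos (by positivity)]
  field_simp; norm_num

theorem fract_natCast_mul_mem_Icc {N : ℕ} {α : ℚ} (hNb : N ∣ α.den) (hb : α.den ≠ N) :
    Int.fract (N * α) ∈ Set.Icc (N / α.den : ℚ) (1 - N / α.den) := by
  have hN : N ≠ 0 := by rintro rfl; simp at hNb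
  have h := Rat.fract_mem_Icc_of_den_ne_one (q := N * α) <| by
    rw [Rat.den_natCast_mul_of_dvd hNb]
    exact fun h => hb (by rw [← Nat.div_mul_cancel hNb, h, one_mul])
  rwa [Rat.den_natCast_mul_of_dvd hNb, Nat.cast_div hNb (by positivity), one_div_div] at h

theorem natCast_div_mem_cand {N c M : ℕ} (hc : c.Coprime M) (hcM : c ≤ M) (hNM : N ∣ M)
    (hM : 0 < M) : (c / M : ℚ) ∈ cand N := by
  refine ⟨by positivity, div_le_one_of_le₀ (mod_cast hcM) (by positivity), ?_⟩
  rwa [Rat.den_natCast_div_natCast hc hM]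

theorem exists_cover_of_natCast_div {N c M : ℕ} {α : ℚ} (hN : 0 < N) (hc : c.Coprime M)
    (hcM : c ≤ M) (hNM : N ∣ M) (hM : M ≤ 2 * N)
    (h : N / α.den + |N * α - N * (c / M : ℚ)| ≤ N / M) :
    ∃ γ ∈ cand N, γ.den ≤ 2 * N ∧ disk α ⊆ disk γ := by
  have hM0 : 0 < M := Nat.pos_of_ne_zero (by rintro rfl; simp_all)
  refine ⟨c / M, natCast_div_mem_cand hc hcM hNM hM0, ?_, disk_subset_disk_of_scaled hN ?_⟩
  · rwa [Rat.den_natCast_div_natCast hc hM0]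
  · rwa [Rat.den_natCast_div_natCast hc hM0]

theorem exists_cover_of_two_mul_lt_den {N : ℕ} (H : CoprimeCondition N) {α : ℚ}
    (hα : α ∈ cand N) (hb : 2 * N < α.den) :
    ∃ γ ∈ cand N, γ.den ≤ 2 * N ∧ disk α ⊆ disk γ := by
  obtain ⟨hα0, hα1, hNb⟩ := hα
  have hN : 0 < N := Nat.pos_of_ne_zero (by rintro rfl; simp at hNb)
  have hN' : (0 : ℚ) < N := mod_cast hN
  set x := (N : ℚ) * α with hxdef
  set f := Int.fract x
  set n := ⌊x⌋₊
  have hx : x = n + f := by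
    rw [natCast_floor_eq_intCast_floor (by positivity), Int.floor_add_fract]
  have hf : (N / α.den : ℚ) ≤ f ∧ f ≤ 1 - N / α.den :=
    fract_natCast_mul_mem_Icc hNb (by omega)
  have hnN : n < N := by
    have hα1' : α < 1 := hα1.lt_of_ne (by rintro rfl; simp at hb; omega)
    exact (Nat.floor_lt (by positivity)).mpr ((mul_lt_iff_lt_one_right hN').mpr hα1')
  rcases H n (by omega) with h | h | h
  · refine exists_cover_of_natCast_div hN (Nat.coprime_comm.mp h) hnN.le dvd_rfl (by omega) ?_
    rw [← hxdef, hx, mul_div_cancel₀ _ hN'.ne', div_self hN'.ne', ← le_sub_iff_add_le',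
      abs_sub_le_iff]
    constructor <;> linarith
  · refine exists_cover_of_natCast_div hN (Nat.coprime_comm.mp h) hnN dvd_rfl (by omega) ?_
    rw [← hxdef, hx, mul_div_cancel₀ _ hN'.ne', div_self hN'.ne', ← le_sub_iff_add_le',
      abs_sub_le_iff]
    push_cast
    constructor <;> linarith
  · have hc : (2 * n + 1).Coprime (2 * N) :=
      Nat.Coprime.mul_right (by simp) (Nat.coprime_comm.mp h)
    refine exists_cover_of_natCast_div hN hc (by omega) (dvd_mul_left N 2) le_rfl ?_
    have hγ : (N : ℚ) * ((2 * n + 1 : ℕ) / (2 * N : ℕ)) = n + 1 / 2 := by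
      push_cast; field_simp
    have hM : (N : ℚ) / (2 * N : ℕ) = 1 / 2 := by push_cast; field_simp
    rw [← hxdef, hx, hγ, hM, ← le_sub_iff_add_le', abs_sub_le_iff]
    constructor <;> linarith

theorem den_le_two_mul_of_mem_SSet {N : ℕ} (H : CoprimeCondition N) {α : ℚ}
    (hα : α ∈ SSet N) : α.den ≤ 2 * N := by
  by_contra! hb
  obtain ⟨γ, hγ, hγden, hsub⟩ := exists_cover_of_two_mul_lt_den H hα.1 hb
  exact notMem_SSet_of_disk_subset hγ (by rintro rfl; omega) hsub hα

theorem poleComplexity_SSet_eq_zero {N : ℕ} (H : CoprimeCondition N) {α : ℚ}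
    (hα : α ∈ SSet N) : poleComplexity (SSet N) α = 0 := by
  refine (congrArg Set.ncard (Set.eq_empty_of_forall_notMem ?_)).trans (Set.ncard_empty ℚ)
  rintro β ⟨hβ, hne, hpole⟩
  obtain ⟨h2N, hcover⟩ := two_mul_le_den_of_northPole_mem_disk hα.1.2.2 hβ.1.2.2 hne hpole
  exact notMem_SSet_of_disk_subset hβ.1 hne
    (hcover (le_antisymm (den_le_two_mul_of_mem_SSet H hα) h2N)) hα

/-- If for every `0 ≤ n ≤ N-1` one of `n`, `n+1`, `2n+1` is coprime to `N`,
then `c(N) = 0`. In particular, `c(N) = 0` whenever `N` has at most two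
distinct prime factors. -/
theorem cN_eq_zero_of_coprime_condition (N : ℕ) (hN : 1 < N) :
    ((∀ n, n ≤ N - 1 →
        Nat.gcd N n = 1 ∨ Nat.gcd N (n + 1) = 1 ∨ Nat.gcd N (2 * n + 1) = 1) →
      cN N = 0) ∧
    (N.primeFactors.card ≤ 2 → cN N = 0) := by
  have hcN (H : CoprimeCondition N) : cN N = 0 :=
    Nat.le_zero.mp <| csSup_le' <| by
      rintro _ ⟨α, hα, rfl⟩
      exact (poleComplexity_SSet_eq_zero H hα).le
  exact ⟨hcN, fun hω => hcN (coprimeCondition_of_card_primeFactors_le_two (by omega) hω)⟩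

end

end Paper
end

section
/- Let (N,n) be a bad pair. Suppose gcd(N, 2n+1) > 1 and gcd(N, 3n+1) = gcd(N, 3n+2) = 1. Then R_{N,n} = D_{(3n+1)/(3N)} ∪ D_{(3n+2)/(3N)}. In particular, c(N,n) = 0. -/
namespace Paper

noncomputable section

/-! A candidate `α = m/(kN)` in lowest terms satisfies `kn ≤ m ≤ k(n+1)`. For `k ≤ 3` the
numerator is forced to be a multiple of `n`, `n+1` or `2n+1`, hence not coprime to `N`, unless
`k = 3` and `m ∈ {3n+1, 3n+2}`; for `k ≥ 4` coprimality with `k` gives `kn < m < k(n+1)`, and a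
disk of radius `1/(kN) ≤ 3/(4·3N)` centred in `[n/N + 1/(kN), (n+1)/N - 1/(kN)]` is covered by the
two disks of radius `1/(3N)` centred at `(3n+1)/(3N)` and `(3n+2)/(3N)`. So `S_{N,n}` consists of
at most these two rationals, which share the denominator `3N`, and the north pole of either lies
outside the other's disk. -/

lemma mem_closedBall_ofReal_iff {z : ℂ} {x r : ℝ} (hr : 0 ≤ r) :
    z ∈ Metric.closedBall (x : ℂ) r ↔ (z.re - x) ^ 2 + z.im ^ 2 ≤ r ^ 2 := by
  rw [Metric.mem_closedBall, Complex.dist_eq_re_im, Real.sqrt_le_left hr]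
  simp

lemma sq_add_sq_le_of_le_midpoint {u v x c r ρ : ℝ} (hρ : 0 ≤ ρ) (hρr : 4 * ρ ≤ 3 * r)
    (hx : c - r + ρ ≤ x) (hu : u ≤ c + r / 2) (huv : (u - x) ^ 2 + v ^ 2 ≤ ρ ^ 2) :
    (u - c) ^ 2 + v ^ 2 ≤ r ^ 2 := by
  have hux : x - ρ ≤ u := by nlinarith [sq_nonneg v, sq_nonneg (u - x + ρ)]
  suffices (x - c) * (2 * u - x - c) ≤ r ^ 2 - ρ ^ 2 by nlinarith
  rcases le_total x c with hxc | hcx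
  · nlinarith [mul_le_mul_of_nonneg_left (by linarith : c - x ≤ r - ρ) (sub_nonneg.2 hxc)]
  · nlinarith [sq_nonneg (x - c - r / 2),
      mul_le_mul_of_nonneg_left (by linarith : 2 * u - x - c ≤ c + r - x) (sub_nonneg.2 hcx)]

-- Any `ρ ≤ (√3/2) r` would do: the two circles meet at height `(√3/2) r` above `c + r/2`.
lemma closedBall_subset_union_of_mem_Icc {c r ρ x : ℝ} (hρ : 0 ≤ ρ) (hρr : 4 * ρ ≤ 3 * r)
    (hlo : c - r + ρ ≤ x) (hhi : x + ρ ≤ c + 2 * r) :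
    Metric.closedBall (x : ℂ) ρ ⊆
      Metric.closedBall (c : ℂ) r ∪ Metric.closedBall ((c + r : ℝ) : ℂ) r := by
  have hr : 0 ≤ r := by linarith
  intro z hz
  rw [mem_closedBall_ofReal_iff hρ] at hz
  rw [Set.mem_union, mem_closedBall_ofReal_iff hr, mem_closedBall_ofReal_iff hr]
  rcases le_total z.re (c + r / 2) with hu | hu
  · exact .inl (sq_add_sq_le_of_le_midpoint hρ hρr hlo hu hz)
  · -- the reflection `t ↦ -t` exchanges the roles of the two balls
    refine .inr ?_
    have := sq_add_sq_le_of_le_midpoint (u := -z.re) (v := z.im) (x := -x) (c := -(c + r))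
      hρ hρr (by linarith) (by linarith) (by convert hz using 2; ring)
    convert this using 2; ring

lemma disk_eq_closedBall (α : ℚ) :
    disk α = Metric.closedBall ((α : ℝ) : ℂ) (1 / (α.den : ℝ)) := by
  rw [disk, Complex.ofReal_ratCast]

lemma northPole_notMem_disk_s9 {p q : ℚ} (hden : p.den = q.den) (hne : p ≠ q) :
    northPole p ∉ disk q := by
  have hpq : (p : ℝ) - q ≠ 0 := sub_ne_zero.2 (by exact_mod_cast hne)
  rw [disk_eq_closedBall, mem_closedBall_ofReal_iff (by positivity)]
  simpa [northPole, hden] using hpq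

lemma sSup_poleComplexity_eq_zero {S : Set ℚ} (hS : ∀ p ∈ S, ∀ q ∈ S, p.den = q.den) :
    sSup (poleComplexity S '' S) = 0 := by
  refine Nat.eq_zero_of_le_zero (csSup_le' ?_)
  rintro _ ⟨p, hp, rfl⟩
  suffices {q ∈ S | q ≠ p ∧ northPole p ∈ disk q} = ∅ by
    rw [poleComplexity, this, Set.ncard_empty]
  refine Set.eq_empty_of_forall_notMem fun q ⟨hq, hne, hmem⟩ => ?_
  exact northPole_notMem_disk_s9 (hS p hp q hq) (Ne.symm hne) hmem

lemma den_natCast_div_natCast {a b : ℕ} (hb : 0 < b) (hab : a.Coprime b) :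
    ((a : ℚ) / b).den = b := by
  have := Rat.den_div_eq_of_coprime (a := a) (b := b) (by exact_mod_cast hb) (by simpa using hab)
  simpa using this

lemma disk_natCast_div_natCast {a b : ℕ} (hb : 0 < b) (hab : a.Coprime b) :
    disk ((a : ℚ) / b) = diskAt a b := by
  rw [disk, diskAt, den_natCast_div_natCast hb hab]
  push_cast
  rfl

lemma diskAt_eq_closedBall (a b : ℕ) :
    diskAt a b = Metric.closedBall ((a / b : ℝ) : ℂ) (1 / b) := by
  rw [diskAt]
  push_cast
  rfl

lemma diskAt_subset_union {N n k m : ℕ} (hN : 0 < N) (hk : 4 ≤ k) (hlo : k * n < m)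
    (hhi : m < k * (n + 1)) :
    diskAt m (k * N) ⊆ diskAt (3 * n + 1) (3 * N) ∪ diskAt (3 * n + 2) (3 * N) := by
  have hN' : (0 : ℝ) < N := by exact_mod_cast hN
  have hk' : (4 : ℝ) ≤ k := by exact_mod_cast hk
  have hlo' : (k : ℝ) * n + 1 ≤ m := by exact_mod_cast hlo
  have hhi' : (m : ℝ) + 1 ≤ k * (n + 1) := by exact_mod_cast hhi
  have hshift : ((3 * n + 2 : ℕ) / (3 * N : ℕ) : ℝ) =
      (3 * n + 1 : ℕ) / (3 * N : ℕ) + 1 / (3 * N : ℕ) := by push_cast; ring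
  rw [diskAt_eq_closedBall, diskAt_eq_closedBall, diskAt_eq_closedBall, hshift]
  apply closedBall_subset_union_of_mem_Icc (by positivity) <;>
    push_cast <;> field_simp <;> nlinarith

section Cover

variable {N n : ℕ} {p q : ℚ}

lemma RB_eq_union_of_cover (hp : p ∈ candB N n) (hq : q ∈ candB N n)
    (hcover : ∀ α ∈ candB N n, α ≠ p → α ≠ q → disk α ⊆ disk p ∪ disk q) :
    RB N n = disk p ∪ disk q := by
  refine subset_antisymm (Set.iUnion₂_subset fun α hα => ?_)
    (Set.union_subset (Set.subset_biUnion_of_mem hp) (Set.subset_biUnion_of_mem hq))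
  by_cases hαp : α = p
  · exact hαp ▸ Set.subset_union_left
  by_cases hαq : α = q
  · exact hαq ▸ Set.subset_union_right
  exact hcover α hα hαp hαq

lemma SB_subset_pair_of_cover (hp : p ∈ candB N n) (hq : q ∈ candB N n)
    (hcover : ∀ α ∈ candB N n, α ≠ p → α ≠ q → disk α ⊆ disk p ∪ disk q) :
    SB N n ⊆ {p, q} := by
  rintro α ⟨hα, hnot⟩
  by_contra hpq
  simp only [Set.mem_insert_iff, Set.mem_singleton_iff, not_or] at hpq
  refine hnot ((hcover α hα hpq.1 hpq.2).trans (Set.union_subset ?_ ?_))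
  · exact Set.subset_biUnion_of_mem (u := disk) ⟨hp, Ne.symm hpq.1⟩
  · exact Set.subset_biUnion_of_mem (u := disk) ⟨hq, Ne.symm hpq.2⟩

end Cover

lemma not_coprime_of_dvd {N d m : ℕ} (hd : 1 < N.gcd d) (hdm : d ∣ m) :
    ¬ m.Coprime N := by
  intro h
  have : N.gcd d = 1 := (h.coprime_dvd_left hdm).symm
  omega

lemma coprime_classification {N n k m : ℕ} (hg : 1 < N.gcd n) (hbad : 1 < N.gcd (n + 1))
    (h2 : 1 < N.gcd (2 * n + 1)) (hk : 0 < k) (hcop : m.Coprime (k * N))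
    (hlo : k * n ≤ m) (hhi : m ≤ k * (n + 1)) :
    (k = 3 ∧ (m = 3 * n + 1 ∨ m = 3 * n + 2)) ∨ (4 ≤ k ∧ k * n < m ∧ m < k * (n + 1)) := by
  have hN : m.Coprime N := Nat.Coprime.coprime_mul_left_right hcop
  have hn : ¬ n ∣ m := fun h => not_coprime_of_dvd hg h hN
  have hn1 : ¬ n + 1 ∣ m := fun h => not_coprime_of_dvd hbad h hN
  rcases (by omega : k = 1 ∨ k = 2 ∨ k = 3 ∨ 4 ≤ k) with rfl | rfl | rfl | hk4
  · rcases (by omega : m = n ∨ m = n + 1) with rfl | rfl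
    · exact absurd dvd_rfl hn
    · exact absurd dvd_rfl hn1
  · rcases (by omega : m = 2 * n ∨ m = 2 * n + 1 ∨ m = 2 * n + 2) with rfl | rfl | rfl
    · exact absurd (Dvd.intro_left 2 rfl) hn
    · exact absurd hN (not_coprime_of_dvd h2 dvd_rfl)
    · exact absurd (Dvd.intro_left 2 rfl) hn1
  · rcases (by omega : m = 3 * n ∨ m = 3 * n + 1 ∨ m = 3 * n + 2 ∨ m = 3 * n + 3)
      with rfl | rfl | rfl | rfl
    · exact absurd (Dvd.intro_left 3 rfl) hn
    · exact .inl ⟨rfl, .inl rfl⟩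
    · exact .inl ⟨rfl, .inr rfl⟩
    · exact absurd (Dvd.intro_left 3 rfl) hn1
  · have hkm : ¬ k ∣ m := fun h => by
      have := Nat.Coprime.eq_one_of_dvd (Nat.Coprime.coprime_mul_right_right hcop).symm h
      omega
    have hlo' : k * n ≠ m := fun h => hkm (Dvd.intro n h)
    have hhi' : k * (n + 1) ≠ m := fun h => hkm (Dvd.intro (n + 1) h)
    exact .inr ⟨hk4, by omega, by omega⟩

lemma coprime_three_mul_add {N n j : ℕ} (hj : j.Coprime 3) (h : N.gcd (3 * n + j) = 1) :
    (3 * n + j).Coprime (3 * N) :=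
  Nat.Coprime.mul_right ((Nat.coprime_mul_left_add_left j 3 n).2 hj) (Nat.Coprime.symm h)

lemma three_mul_add_div_mem_candB {N n j : ℕ} (hN : 0 < N) (hj : j ≤ 3)
    (hcop : (3 * n + j).Coprime (3 * N)) :
    ((3 * n + j : ℕ) : ℚ) / (3 * N : ℕ) ∈ candB N n := by
  have hN' : (0 : ℚ) < N := by exact_mod_cast hN
  have hj' : (j : ℚ) ≤ 3 := by exact_mod_cast hj
  refine ⟨?_, ?_, ?_⟩
  · rw [div_le_div_iff₀ hN' (by positivity)]
    push_cast
    nlinarith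
  · rw [div_le_div_iff₀ (by positivity) hN']
    push_cast
    nlinarith
  · rw [den_natCast_div_natCast (by omega) hcop]
    exact Dvd.intro_left 3 rfl

lemma exists_coprime_div_of_mem_candB {N n : ℕ} {α : ℚ} (hα : α ∈ candB N n) :
    ∃ m k : ℕ, 0 < k ∧ m.Coprime (k * N) ∧ α = (m : ℚ) / (k * N : ℕ) ∧
      k * n ≤ m ∧ m ≤ k * (n + 1) := by
  obtain ⟨hlo, hhi, k, hk⟩ := hα
  have hkN : 0 < k * N := by rw [mul_comm, ← hk]; exact α.pos
  have hN : (0 : ℚ) < N := by exact_mod_cast Nat.pos_of_mul_pos_left hkN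
  obtain ⟨m, hm⟩ : ∃ m : ℕ, (m : ℤ) = α.num :=
    ⟨_, Int.natAbs_of_nonneg (Rat.num_nonneg.2 (le_trans (by positivity) hlo))⟩
  have hα : α = (m : ℚ) / (k * N : ℕ) := by
    rw [← mul_comm N, ← hk, ← Int.cast_natCast, hm, Rat.num_div_den]
  have hmul : α * (k * N : ℕ) = m := by rw [hα, div_mul_cancel₀]; positivity
  refine ⟨m, k, Nat.pos_of_mul_pos_right hkN, ?_, hα, ?_, ?_⟩
  · simpa [← hm, hk, mul_comm] using α.reduced
  · suffices ((k * n : ℕ) : ℚ) ≤ m by exact_mod_cast this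
    calc ((k * n : ℕ) : ℚ) = n / N * (k * N : ℕ) := by push_cast; field_simp
      _ ≤ α * (k * N : ℕ) := by gcongr
      _ = m := hmul
  · suffices (m : ℚ) ≤ (k * (n + 1) : ℕ) by exact_mod_cast this
    calc (m : ℚ) = α * (k * N : ℕ) := hmul.symm
      _ ≤ (n + 1) / N * (k * N : ℕ) := by gcongr
      _ = (k * (n + 1) : ℕ) := by push_cast; field_simp

lemma disk_subset_diskAt_union_of_mem_candB {N n : ℕ} (hN : 0 < N) (hg : 1 < N.gcd n)
    (hbad : 1 < N.gcd (n + 1)) (h2 : 1 < N.gcd (2 * n + 1)) {α : ℚ} (hα : α ∈ candB N n)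
    (hα₁ : α ≠ ((3 * n + 1 : ℕ) : ℚ) / (3 * N : ℕ))
    (hα₂ : α ≠ ((3 * n + 2 : ℕ) : ℚ) / (3 * N : ℕ)) :
    disk α ⊆ diskAt (3 * n + 1) (3 * N) ∪ diskAt (3 * n + 2) (3 * N) := by
  obtain ⟨m, k, hk, hcop, rfl, hlo, hhi⟩ := exists_coprime_div_of_mem_candB hα
  rcases coprime_classification hg hbad h2 hk hcop hlo hhi with
    ⟨rfl, rfl | rfl⟩ | ⟨hk4, hlo, hhi⟩
  · exact absurd rfl hα₁
  · exact absurd rfl hα₂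
  rw [disk_natCast_div_natCast (by positivity) hcop]
  exact diskAt_subset_union hN hk4 hlo hhi

theorem bad_region_three_points_general (N n : ℕ) (hN : 1 < N)
    (hg : 1 < Nat.gcd N n) (hbad : 1 < Nat.gcd N (n + 1))
    (h2 : 1 < Nat.gcd N (2 * n + 1))
    (h31 : Nat.gcd N (3 * n + 1) = 1) (h32 : Nat.gcd N (3 * n + 2) = 1) :
    RB N n = diskAt (3 * n + 1) (3 * N) ∪ diskAt (3 * n + 2) (3 * N) ∧ cB N n = 0 := by
  have hN0 : 0 < N := by omega
  have hc₁ := coprime_three_mul_add (by decide) h31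
  have hc₂ := coprime_three_mul_add (by decide) h32
  have hq₁ := three_mul_add_div_mem_candB hN0 (by norm_num) hc₁
  have hq₂ := three_mul_add_div_mem_candB hN0 (by norm_num) hc₂
  have hdisk₁ := disk_natCast_div_natCast (by omega) hc₁
  have hdisk₂ := disk_natCast_div_natCast (by omega) hc₂
  have hcover := fun α hα hα₁ hα₂ => hdisk₁ ▸ hdisk₂ ▸
    disk_subset_diskAt_union_of_mem_candB hN0 hg hbad h2 (α := α) hα hα₁ hα₂
  refine ⟨by rw [RB_eq_union_of_cover hq₁ hq₂ hcover, hdisk₁, hdisk₂], ?_⟩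
  have hden : ∀ α ∈ SB N n, α.den = 3 * N := fun α hα => by
    rcases SB_subset_pair_of_cover hq₁ hq₂ hcover hα with rfl | rfl
    · exact den_natCast_div_natCast (by omega) hc₁
    · exact den_natCast_div_natCast (by omega) hc₂
  exact sSup_poleComplexity_eq_zero fun p hp q hq => (hden p hp).trans (hden q hq).symm

/-- For a bad pair `(N,n)` with `gcd(N,2n+1) > 1` and `gcd(N,3n+1) = gcd(N,3n+2) = 1`,
the region `R_{N,n}` is the union of the two disks `D_{(3n+1)/(3N)}` and
`D_{(3n+2)/(3N)}`. In particular `c(N,n) = 0`. -/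
theorem bad_region_three_points (N n : ℕ) (hN : 1 < N) (hn : n ≤ N - 1)
    (hg : 1 < Nat.gcd N n) (hbad : 1 < Nat.gcd N (n + 1))
    (h2 : 1 < Nat.gcd N (2 * n + 1))
    (h31 : Nat.gcd N (3 * n + 1) = 1) (h32 : Nat.gcd N (3 * n + 2) = 1) :
    RB N n = diskAt (3 * n + 1) (3 * N) ∪ diskAt (3 * n + 2) (3 * N) ∧ cB N n = 0 :=
  bad_region_three_points_general N n hN hg hbad h2 h31 h32

end

end Paper
end

section
/- Let (N,n) be a bad pair. Suppose that (a) gcd(N, 2n+1) > 1; (b) gcd(N, 3n+1) > 1 and gcd(N, 3n+2) = 1; (c) gcd(N, 4n+1) = 1. Then R_{N,n} = D_{(3n+2)/(3N)} ∪ D_{(4n+1)/(4N)}. In particular, c(N,n) = 0. -/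
namespace Paper

noncomputable section

lemma disk_eq (α : ℚ) : disk α = Metric.closedBall (((α : ℝ)) : ℂ) (1 / (α.den : ℝ)) := by
  simp [disk]

lemma diskAt_eq (a b : ℕ) :
    diskAt a b = Metric.closedBall ((((a : ℝ) / (b : ℝ) : ℝ)) : ℂ) (1 / (b : ℝ)) := by
  unfold diskAt; push_cast; rfl

/-- decomposition of a candidate -/
lemma cand_decomp {N n : ℕ} (hN : 0 < N) {α : ℚ} (hα : α ∈ candB N n) :
    ∃ A k r : ℕ, 0 < k ∧ A = n * k + r ∧ r ≤ k ∧ Nat.Coprime A (N * k) ∧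
      α.den = N * k ∧ (α : ℝ) = (A : ℝ) / ((N : ℝ) * k) := by
  obtain ⟨h1, h2, k, hk⟩ := hα
  have hden : 0 < α.den := α.pos
  have hk0 : 0 < k := by
    rcases Nat.eq_zero_or_pos k with h | h
    · simp [h, hk] at hden
    · exact h
  have hα0 : (0 : ℚ) ≤ α := le_trans (by positivity) h1
  have hnum : 0 ≤ α.num := Rat.num_nonneg.mpr hα0
  set A := α.num.toNat with hAdef
  have hA : (A : ℤ) = α.num := Int.toNat_of_nonneg hnum
  have hαeq : α = (A : ℚ) / ((N : ℚ) * k) := by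
    rw [← Rat.num_div_den α, hk]
    push_cast [← hA]
    ring_nf
  have hNQ : (0:ℚ) < (N:ℚ) := by exact_mod_cast hN
  have hkQ : (0:ℚ) < (k:ℚ) := by exact_mod_cast hk0
  -- lower bound : n * k ≤ A
  have hlow : n * k ≤ A := by
    rw [hαeq, div_le_div_iff₀ hNQ (by positivity)] at h1
    have : (n:ℚ) * k ≤ (A:ℚ) := by
      have := h1
      nlinarith
    exact_mod_cast this
  have hhigh : A ≤ n * k + k := by
    rw [hαeq, div_le_div_iff₀ (by positivity) hNQ] at h2
    have : (A:ℚ) ≤ (n:ℚ) * k + k := by nlinarith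
    exact_mod_cast this
  refine ⟨A, k, A - n * k, hk0, by omega, by omega, ?_, hk, ?_⟩
  · have := α.reduced
    rw [hk] at this
    have hAB : A = α.num.natAbs := by omega
    rwa [hAB]
  · rw [hαeq]; push_cast; ring

lemma memBall_iff (c ρ : ℝ) (z : ℂ) (hρ : 0 ≤ ρ) :
    z ∈ Metric.closedBall (c : ℂ) ρ ↔ (z.re - c) ^ 2 + z.im ^ 2 ≤ ρ ^ 2 := by
  rw [Metric.mem_closedBall, Complex.dist_eq_re_im, Real.sqrt_le_iff]
  simp only [Complex.ofReal_re, Complex.ofReal_im, sub_zero]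
  exact ⟨fun h => h.2, fun h => ⟨hρ, h⟩⟩

lemma ballSubset (c C ρ P : ℝ) (h1 : C - c ≤ P - ρ) (h2 : c - C ≤ P - ρ) :
    Metric.closedBall (c : ℂ) ρ ⊆ Metric.closedBall (C : ℂ) P := by
  apply Metric.closedBall_subset_closedBall'
  have hd : dist (c : ℂ) (C : ℂ) = |c - C| := by
    rw [Complex.dist_of_im_eq (by simp), Real.dist_eq]; simp
  rw [hd]
  have := abs_le.mpr (⟨by linarith, h2⟩ : -(P - ρ) ≤ c - C ∧ c - C ≤ P - ρ)
  linarith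

lemma lens5 (b t : ℝ) (ht : 0 ≤ t) :
    Metric.closedBall ((b + 2*t/5 : ℝ) : ℂ) (t/5) ⊆
      Metric.closedBall ((b + 2*t/3 : ℝ) : ℂ) (t/3) ∪
      Metric.closedBall ((b + t/4 : ℝ) : ℂ) (t/4) := by
  intro z hz
  rw [memBall_iff (b + 2*t/5) (t/5) z (by positivity)] at hz
  rcases le_or_gt z.re (b + 2*t/5) with hx | hx
  · right
    exact (memBall_iff (b + t/4) (t/4) z (by positivity)).mpr
      (by nlinarith [mul_nonneg (sub_nonneg.mpr hx) ht])
  · left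
    exact (memBall_iff (b + 2*t/3) (t/3) z (by positivity)).mpr
      (by nlinarith [mul_nonneg (sub_nonneg.mpr hx.le) ht])

lemma lens7 (b t : ℝ) (ht : 0 ≤ t) :
    Metric.closedBall ((b + 3*t/7 : ℝ) : ℂ) (t/7) ⊆
      Metric.closedBall ((b + 2*t/3 : ℝ) : ℂ) (t/3) ∪
      Metric.closedBall ((b + t/4 : ℝ) : ℂ) (t/4) := by
  intro z hz
  rw [memBall_iff (b + 3*t/7) (t/7) z (by positivity)] at hz
  rcases le_or_gt z.re (b + 2*t/5) with hx | hx
  · right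
    exact (memBall_iff (b + t/4) (t/4) z (by positivity)).mpr
      (by nlinarith [mul_nonneg (sub_nonneg.mpr hx) ht])
  · left
    exact (memBall_iff (b + 2*t/3) (t/3) z (by positivity)).mpr
      (by nlinarith [mul_nonneg (sub_nonneg.mpr hx.le) ht])

/-- The main covering lemma. -/
lemma caseD2 (N n k r A : ℕ) (hN : 0 < N) (hk : 0 < k) (hA : A = n*k+r)
    (h1 : 1 ≤ r) (h2 : 4*r+4 ≤ 2*k) :
    Metric.closedBall ((((A:ℝ)/((N:ℝ)*k) : ℝ)) : ℂ) (1/((N:ℝ)*k)) ⊆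
      Metric.closedBall ((((4*(n:ℝ)+1)/(4*(N:ℝ))) : ℝ) : ℂ) (1/(4*(N:ℝ))) := by
  have hNR : (0:ℝ) < (N:ℝ) := by exact_mod_cast hN
  have hkR : (0:ℝ) < (k:ℝ) := by exact_mod_cast hk
  have hNne : (N:ℝ) ≠ 0 := hNR.ne'
  have hkne : (k:ℝ) ≠ 0 := hkR.ne'
  have hD : (0:ℝ) < 12*((N:ℝ)*k) := by positivity
  have hc : 12*((n:ℝ)*k) + 3*k + 12 ≤ 12*(A:ℝ) + 3*k := by
    have : 12*(n*k) + 3*k + 12 ≤ 12*A + 3*k := by omega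
    exact_mod_cast this
  have hc' : 12*(A:ℝ) + 12 ≤ 12*((n:ℝ)*k) + 6*k := by
    have : 12*A + 12 ≤ 12*(n*k) + 6*k := by omega
    exact_mod_cast this
  apply ballSubset
  · rw [show (4*(n:ℝ)+1)/(4*(N:ℝ)) = (12*((n:ℝ)*k)+3*k)/(12*((N:ℝ)*k)) by
      field_simp; ring,
      show (A:ℝ)/((N:ℝ)*k) = 12*(A:ℝ)/(12*((N:ℝ)*k)) by field_simp,
      show 1/(4*(N:ℝ)) = 3*(k:ℝ)/(12*((N:ℝ)*k)) by field_simp; ring,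
      show 1/((N:ℝ)*k) = 12/(12*((N:ℝ)*k)) by field_simp,
      div_sub_div_same, div_sub_div_same, div_le_div_iff_of_pos_right hD]
    linarith
  · rw [show (4*(n:ℝ)+1)/(4*(N:ℝ)) = (12*((n:ℝ)*k)+3*k)/(12*((N:ℝ)*k)) by
      field_simp; ring,
      show (A:ℝ)/((N:ℝ)*k) = 12*(A:ℝ)/(12*((N:ℝ)*k)) by field_simp,
      show 1/(4*(N:ℝ)) = 3*(k:ℝ)/(12*((N:ℝ)*k)) by field_simp; ring,
      show 1/((N:ℝ)*k) = 12/(12*((N:ℝ)*k)) by field_simp,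
      div_sub_div_same, div_sub_div_same, div_le_div_iff_of_pos_right hD]
    linarith

lemma caseD1 (N n k r A : ℕ) (hN : 0 < N) (hk : 0 < k) (hA : A = n*k+r)
    (h1 : k + 3 ≤ 3*r) (h2 : r + 1 ≤ k) :
    Metric.closedBall ((((A:ℝ)/((N:ℝ)*k) : ℝ)) : ℂ) (1/((N:ℝ)*k)) ⊆
      Metric.closedBall ((((3*(n:ℝ)+2)/(3*(N:ℝ))) : ℝ) : ℂ) (1/(3*(N:ℝ))) := by
  have hNR : (0:ℝ) < (N:ℝ) := by exact_mod_cast hN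
  have hkR : (0:ℝ) < (k:ℝ) := by exact_mod_cast hk
  have hNne : (N:ℝ) ≠ 0 := hNR.ne'
  have hkne : (k:ℝ) ≠ 0 := hkR.ne'
  have hD : (0:ℝ) < 12*((N:ℝ)*k) := by positivity
  have hc : 12*((n:ℝ)*k) + 8*k + 12 ≤ 12*(A:ℝ) + 4*k := by
    have : 12*(n*k) + 8*k + 12 ≤ 12*A + 4*k := by omega
    exact_mod_cast this
  have hc' : 12*(A:ℝ) + 12 ≤ 12*((n:ℝ)*k) + 12*k := by
    have : 12*A + 12 ≤ 12*(n*k) + 12*k := by omega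
    exact_mod_cast this
  apply ballSubset
  · rw [show (3*(n:ℝ)+2)/(3*(N:ℝ)) = (12*((n:ℝ)*k)+8*k)/(12*((N:ℝ)*k)) by
      field_simp; ring,
      show (A:ℝ)/((N:ℝ)*k) = 12*(A:ℝ)/(12*((N:ℝ)*k)) by field_simp,
      show 1/(3*(N:ℝ)) = 4*(k:ℝ)/(12*((N:ℝ)*k)) by field_simp; ring,
      show 1/((N:ℝ)*k) = 12/(12*((N:ℝ)*k)) by field_simp,
      div_sub_div_same, div_sub_div_same, div_le_div_iff_of_pos_right hD]
    linarith
  · rw [show (3*(n:ℝ)+2)/(3*(N:ℝ)) = (12*((n:ℝ)*k)+8*k)/(12*((N:ℝ)*k)) by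
      field_simp; ring,
      show (A:ℝ)/((N:ℝ)*k) = 12*(A:ℝ)/(12*((N:ℝ)*k)) by field_simp,
      show 1/(3*(N:ℝ)) = 4*(k:ℝ)/(12*((N:ℝ)*k)) by field_simp; ring,
      show 1/((N:ℝ)*k) = 12/(12*((N:ℝ)*k)) by field_simp,
      div_sub_div_same, div_sub_div_same, div_le_div_iff_of_pos_right hD]
    linarith

lemma lensA (N n A : ℕ) (hN : 0 < N) (hA : A = 5*n+2) :
    Metric.closedBall ((((A:ℝ)/((N:ℝ)*((5:ℕ):ℝ)) : ℝ)) : ℂ) (1/((N:ℝ)*((5:ℕ):ℝ))) ⊆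
      Metric.closedBall ((((3*(n:ℝ)+2)/(3*(N:ℝ))) : ℝ) : ℂ) (1/(3*(N:ℝ))) ∪
      Metric.closedBall ((((4*(n:ℝ)+1)/(4*(N:ℝ))) : ℝ) : ℂ) (1/(4*(N:ℝ))) := by
  have hNR : (0:ℝ) < (N:ℝ) := by exact_mod_cast hN
  have hNne : (N:ℝ) ≠ 0 := hNR.ne'
  have hA' : (A:ℝ) = 5*(n:ℝ)+2 := by exact_mod_cast hA
  rw [show (A:ℝ)/((N:ℝ)*((5:ℕ):ℝ)) = (n:ℝ)/N + 2*(1/(N:ℝ))/5 by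
      rw [hA']; push_cast; field_simp,
    show 1/((N:ℝ)*((5:ℕ):ℝ)) = (1/(N:ℝ))/5 by push_cast; field_simp,
    show (3*(n:ℝ)+2)/(3*(N:ℝ)) = (n:ℝ)/N + 2*(1/(N:ℝ))/3 by field_simp,
    show 1/(3*(N:ℝ)) = (1/(N:ℝ))/3 by field_simp,
    show (4*(n:ℝ)+1)/(4*(N:ℝ)) = (n:ℝ)/N + (1/(N:ℝ))/4 by field_simp,
    show 1/(4*(N:ℝ)) = (1/(N:ℝ))/4 by field_simp]
  exact lens5 ((n:ℝ)/N) (1/(N:ℝ)) (by positivity)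

lemma lensB (N n A : ℕ) (hN : 0 < N) (hA : A = 7*n+3) :
    Metric.closedBall ((((A:ℝ)/((N:ℝ)*((7:ℕ):ℝ)) : ℝ)) : ℂ) (1/((N:ℝ)*((7:ℕ):ℝ))) ⊆
      Metric.closedBall ((((3*(n:ℝ)+2)/(3*(N:ℝ))) : ℝ) : ℂ) (1/(3*(N:ℝ))) ∪
      Metric.closedBall ((((4*(n:ℝ)+1)/(4*(N:ℝ))) : ℝ) : ℂ) (1/(4*(N:ℝ))) := by
  have hNR : (0:ℝ) < (N:ℝ) := by exact_mod_cast hN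
  have hNne : (N:ℝ) ≠ 0 := hNR.ne'
  have hA' : (A:ℝ) = 7*(n:ℝ)+3 := by exact_mod_cast hA
  rw [show (A:ℝ)/((N:ℝ)*((7:ℕ):ℝ)) = (n:ℝ)/N + 3*(1/(N:ℝ))/7 by
      rw [hA']; push_cast; field_simp,
    show 1/((N:ℝ)*((7:ℕ):ℝ)) = (1/(N:ℝ))/7 by push_cast; field_simp,
    show (3*(n:ℝ)+2)/(3*(N:ℝ)) = (n:ℝ)/N + 2*(1/(N:ℝ))/3 by field_simp,
    show 1/(3*(N:ℝ)) = (1/(N:ℝ))/3 by field_simp,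
    show (4*(n:ℝ)+1)/(4*(N:ℝ)) = (n:ℝ)/N + (1/(N:ℝ))/4 by field_simp,
    show 1/(4*(N:ℝ)) = (1/(N:ℝ))/4 by field_simp]
  exact lens7 ((n:ℝ)/N) (1/(N:ℝ)) (by positivity)

set_option maxHeartbeats 1000000 in
/-- The main covering lemma. -/
lemma cover {N n : ℕ} (hN : 1 < N)
    (hg : 1 < Nat.gcd N n) (hbad : 1 < Nat.gcd N (n + 1))
    (h2 : 1 < Nat.gcd N (2 * n + 1)) (h31 : 1 < Nat.gcd N (3 * n + 1))
    {α : ℚ} (hα : α ∈ candB N n) :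
    disk α ⊆ diskAt (3 * n + 2) (3 * N) ∪ diskAt (4 * n + 1) (4 * N) := by
  have hN0 : 0 < N := by omega
  obtain ⟨A, k, r, hk0, hAr, hrk, hcop, hden, hre⟩ := cand_decomp hN0 hα
  rw [disk_eq, diskAt_eq, diskAt_eq, hre, hden]
  rw [show ((N*k : ℕ):ℝ) = (N:ℝ)*k by push_cast; ring,
    show ((3*n+2 : ℕ):ℝ) = 3*(n:ℝ)+2 by push_cast; ring,
    show ((3*N : ℕ):ℝ) = 3*(N:ℝ) by push_cast; ring,
    show ((4*n+1 : ℕ):ℝ) = 4*(n:ℝ)+1 by push_cast; ring,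
    show ((4*N : ℕ):ℝ) = 4*(N:ℝ) by push_cast; ring]
  have hcase : r = 0 ∨ r = k ∨ (1 ≤ r ∧ 4 * r + 4 ≤ 2 * k) ∨ (k + 3 ≤ 3 * r ∧ r + 1 ≤ k)
      ∨ (k = 2 ∧ r = 1) ∨ (k = 3 ∧ r = 1) ∨ (k = 4 ∧ r = 2)
      ∨ (k = 5 ∧ r = 2) ∨ (k = 7 ∧ r = 3) := by omega
  have gdvd : ∀ d : ℕ, d ∣ A → d ∣ N * k → d = 1 := by
    intro d hd1 hd2
    have hd : d ∣ Nat.gcd A (N * k) := Nat.dvd_gcd hd1 hd2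
    rw [hcop] at hd
    exact Nat.dvd_one.mp hd
  rcases hcase with h | h | ⟨ha, hb⟩ | ⟨ha, hb⟩ | ⟨ha, hb⟩ | ⟨ha, hb⟩ | ⟨ha, hb⟩ | ⟨ha, hb⟩ | ⟨ha, hb⟩
  · -- r = 0
    exfalso
    have hA' : A = n * k := by omega
    have hk1 : k = 1 := gdvd k ⟨n, by rw [hA']; ring⟩ ⟨N, by ring⟩
    subst hk1
    have hAn : A = n := by omega
    have : Nat.gcd N n = 1 :=
      gdvd _ (hAn ▸ Nat.gcd_dvd_right N n) ((Nat.gcd_dvd_left N n).trans ⟨1, rfl⟩)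
    omega
  · -- r = k
    exfalso
    have hA' : A = (n + 1) * k := by rw [hAr, h]; ring
    have hk1 : k = 1 := gdvd k ⟨n + 1, by rw [hA']; ring⟩ ⟨N, by ring⟩
    subst hk1
    have hAn : A = n + 1 := by omega
    have : Nat.gcd N (n + 1) = 1 :=
      gdvd _ (hAn ▸ Nat.gcd_dvd_right N (n + 1)) ((Nat.gcd_dvd_left N (n + 1)).trans ⟨1, rfl⟩)
    omega
  · exact Set.subset_union_of_subset_right (caseD2 N n k r A hN0 hk0 hAr ha hb) _
  · exact Set.subset_union_of_subset_left (caseD1 N n k r A hN0 hk0 hAr ha hb) _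
  · -- (2,1)
    exfalso
    subst ha; subst hb
    have hA' : A = 2 * n + 1 := by omega
    have : Nat.gcd N (2*n+1) = 1 :=
      gdvd _ (hA' ▸ Nat.gcd_dvd_right N (2*n+1)) ((Nat.gcd_dvd_left N (2*n+1)).trans ⟨2, rfl⟩)
    omega
  · -- (3,1)
    exfalso
    subst ha; subst hb
    have hA' : A = 3 * n + 1 := by omega
    have : Nat.gcd N (3*n+1) = 1 :=
      gdvd _ (hA' ▸ Nat.gcd_dvd_right N (3*n+1)) ((Nat.gcd_dvd_left N (3*n+1)).trans ⟨3, rfl⟩)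
    omega
  · -- (4,2)
    exfalso
    subst ha; subst hb
    have : (2:ℕ) = 1 := gdvd 2 ⟨2*n+1, by omega⟩ ⟨N * 2, by omega⟩
    omega
  · -- (5,2)
    subst ha; subst hb
    exact lensA N n A hN0 (by omega)
  · -- (7,3)
    subst ha; subst hb
    exact lensB N n A hN0 (by omega)

/-- numerator/denominator of a nat fraction in lowest terms -/
lemma nat_div_num_den {a b : ℕ} (hb : 0 < b) (h : Nat.Coprime a b) :
    ((a : ℚ) / (b : ℚ)).num = a ∧ ((a : ℚ) / (b : ℚ)).den = b := by
  have hb' : (0:ℤ) < (b:ℤ) := by exact_mod_cast hb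
  have h' : Nat.Coprime (a:ℤ).natAbs (b:ℤ).natAbs := by simpa using h
  have h1 := Rat.num_div_eq_of_coprime hb' h'
  have h2 := Rat.den_div_eq_of_coprime hb' h'
  constructor
  · rw [show ((a:ℚ)/(b:ℚ)) = ((a:ℤ):ℚ)/((b:ℤ):ℚ) by push_cast; ring]
    rw [h1]
  · rw [show ((a:ℚ)/(b:ℚ)) = ((a:ℤ):ℚ)/((b:ℤ):ℚ) by push_cast; ring]
    exact_mod_cast h2

lemma cop1 {N n : ℕ} (h32 : Nat.gcd N (3 * n + 2) = 1) :
    Nat.Coprime (3 * n + 2) (3 * N) := by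
  apply Nat.Coprime.mul_right
  · exact (((Nat.Prime.coprime_iff_not_dvd (by norm_num)).mpr (by omega)) :
      Nat.Coprime 3 (3*n+2)).symm
  · exact (Nat.coprime_comm.mp h32)

lemma cop2 {N n : ℕ} (h41 : Nat.gcd N (4 * n + 1) = 1) :
    Nat.Coprime (4 * n + 1) (4 * N) := by
  apply Nat.Coprime.mul_right
  · have h2 : Nat.Coprime 2 (4*n+1) := (Nat.Prime.coprime_iff_not_dvd (by norm_num)).mpr (by omega)
    have : Nat.Coprime 4 (4*n+1) := by
      have := Nat.Coprime.mul h2 h2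
      simpa using this
    exact this.symm
  · exact (Nat.coprime_comm.mp h41)

lemma q_mem_cand {N n a m : ℕ} (hN : 0 < N) (hm : 0 < m)
    (hlow : n * m ≤ a) (hhigh : a ≤ n * m + m) (hcop : Nat.Coprime a (m * N)) :
    ((a : ℚ) / ((m * N : ℕ) : ℚ)) ∈ candB N n := by
  have hmN : 0 < m * N := by positivity
  obtain ⟨hnum, hden⟩ := nat_div_num_den hmN hcop
  have hNQ : (0:ℚ) < (N:ℚ) := by exact_mod_cast hN
  have hmQ : (0:ℚ) < ((m*N : ℕ):ℚ) := by exact_mod_cast hmN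
  refine ⟨?_, ?_, ?_⟩
  · rw [div_le_div_iff₀ hNQ hmQ]
    have h0 : n * (m * N) ≤ a * N := by
      calc n * (m * N) = (n * m) * N := by ring
      _ ≤ a * N := Nat.mul_le_mul_right N hlow
    have : ((n * (m * N) : ℕ) : ℚ) ≤ ((a * N : ℕ) : ℚ) := by exact_mod_cast h0
    push_cast at this ⊢
    nlinarith
  · rw [div_le_div_iff₀ hmQ hNQ]
    have h0 : a * N ≤ (n+1) * (m * N) := by
      calc a * N ≤ ((n+1) * m) * N := Nat.mul_le_mul_right N (by rw [Nat.add_mul]; omega)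
      _ = (n+1) * (m * N) := by ring
    have : ((a * N : ℕ) : ℚ) ≤ (((n+1) * (m * N) : ℕ) : ℚ) := by exact_mod_cast h0
    push_cast at this ⊢
    nlinarith
  · rw [hden]
    exact ⟨m, by ring⟩

lemma disk_q_eq {a b : ℕ} (hb : 0 < b) (hcop : Nat.Coprime a b) :
    disk ((a : ℚ) / (b : ℚ)) = diskAt a b := by
  obtain ⟨hnum, hden⟩ := nat_div_num_den hb hcop
  unfold disk diskAt
  rw [hden]
  congr 1
  push_cast
  rfl

lemma pole_re (q : ℚ) : (northPole q).re = (q : ℝ) := by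
  simp [northPole]

lemma pole_im (q : ℚ) : (northPole q).im = 1 / (q.den : ℝ) := by
  simp [northPole]

lemma poleOut1 (b t : ℝ) (ht : 0 < t) (z : ℂ) (hre : z.re = b + 2*t/3) (him : z.im = t/3) :
    z ∉ Metric.closedBall ((b + t/4 : ℝ) : ℂ) (t/4) := by
  intro h
  rw [memBall_iff (b + t/4) (t/4) z (by positivity)] at h
  rw [hre, him] at h
  nlinarith [mul_pos ht ht]

lemma poleOut2 (b t : ℝ) (ht : 0 < t) (z : ℂ) (hre : z.re = b + t/4) (him : z.im = t/4) :
    z ∉ Metric.closedBall ((b + 2*t/3 : ℝ) : ℂ) (t/3) := by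
  intro h
  rw [memBall_iff (b + 2*t/3) (t/3) z (by positivity)] at h
  rw [hre, him] at h
  nlinarith [mul_pos ht ht]


set_option maxHeartbeats 1000000 in
/-- For a bad pair `(N,n)` with `gcd(N,2n+1) > 1`, `gcd(N,3n+1) > 1`,
`gcd(N,3n+2) = 1` and `gcd(N,4n+1) = 1`, the region `R_{N,n}` is the union of
the two disks `D_{(3n+2)/(3N)}` and `D_{(4n+1)/(4N)}`. In particular `c(N,n) = 0`. -/
theorem bad_region_four_points_two (N n : ℕ) (hN : 1 < N) (hn : n ≤ N - 1)
    (hg : 1 < Nat.gcd N n) (hbad : 1 < Nat.gcd N (n + 1))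
    (h2 : 1 < Nat.gcd N (2 * n + 1))
    (h31 : 1 < Nat.gcd N (3 * n + 1)) (h32 : Nat.gcd N (3 * n + 2) = 1)
    (h41 : Nat.gcd N (4 * n + 1) = 1) :
    RB N n = diskAt (3 * n + 2) (3 * N) ∪ diskAt (4 * n + 1) (4 * N) ∧ cB N n = 0 := by
  have hN0 : 0 < N := by omega
  have hNR : (0:ℝ) < (N:ℝ) := by exact_mod_cast hN0
  have hNne : (N:ℝ) ≠ 0 := hNR.ne'
  set q1 : ℚ := ((3*n+2 : ℕ):ℚ)/((3*N : ℕ):ℚ) with hq1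
  set q2 : ℚ := ((4*n+1 : ℕ):ℚ)/((4*N : ℕ):ℚ) with hq2
  have hc1 := cop1 h32
  have hc2 := cop2 h41
  have hden1 : q1.den = 3*N := (nat_div_num_den (by positivity) hc1).2
  have hden2 : q2.den = 4*N := (nat_div_num_den (by positivity) hc2).2
  have hm1 : q1 ∈ candB N n := q_mem_cand hN0 (by norm_num) (by omega) (by omega) hc1
  have hm2 : q2 ∈ candB N n := q_mem_cand hN0 (by norm_num) (by omega) (by omega) hc2
  have hd1 : disk q1 = diskAt (3*n+2) (3*N) := disk_q_eq (by positivity) hc1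
  have hd2 : disk q2 = diskAt (4*n+1) (4*N) := disk_q_eq (by positivity) hc2
  have hne12 : q1 ≠ q2 := by
    intro h
    rw [h, hden2] at hden1
    omega
  -- region equality
  have hRB : RB N n = diskAt (3 * n + 2) (3 * N) ∪ diskAt (4 * n + 1) (4 * N) := by
    apply Set.Subset.antisymm
    · exact Set.iUnion₂_subset fun α hα => cover hN hg hbad h2 h31 hα
    · apply Set.union_subset
      · rw [← hd1]; exact Set.subset_biUnion_of_mem hm1
      · rw [← hd2]; exact Set.subset_biUnion_of_mem hm2
  refine ⟨hRB, ?_⟩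
  -- SB is contained in {q1, q2}
  have hSB : SB N n ⊆ {q1, q2} := by
    intro α hα
    by_contra hne
    simp only [Set.mem_insert_iff, Set.mem_singleton_iff, not_or] at hne
    apply hα.2
    have hsub : disk α ⊆ disk q1 ∪ disk q2 := by
      rw [hd1, hd2]; exact cover hN hg hbad h2 h31 hα.1
    refine hsub.trans (Set.union_subset ?_ ?_)
    · exact Set.subset_biUnion_of_mem (show q1 ∈ candB N n \ {α} from
        ⟨hm1, by simp [Ne.symm hne.1]⟩)
    · exact Set.subset_biUnion_of_mem (show q2 ∈ candB N n \ {α} from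
        ⟨hm2, by simp [Ne.symm hne.2]⟩)
  -- the poles are not covered by the other disk
  have hre1 : (northPole q1).re = (n:ℝ)/N + 2*(1/(N:ℝ))/3 := by
    rw [pole_re, hq1]
    push_cast
    field_simp
  have him1 : (northPole q1).im = (1/(N:ℝ))/3 := by
    rw [pole_im, hden1]
    push_cast
    field_simp
  have hre2 : (northPole q2).re = (n:ℝ)/N + (1/(N:ℝ))/4 := by
    rw [pole_re, hq2]
    push_cast
    field_simp
  have him2 : (northPole q2).im = (1/(N:ℝ))/4 := by
    rw [pole_im, hden2]
    push_cast
    field_simp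
  have hp1 : northPole q1 ∉ disk q2 := by
    rw [hd2, diskAt_eq,
      show ((4*n+1 : ℕ):ℝ) = 4*(n:ℝ)+1 by push_cast; ring,
      show ((4*N : ℕ):ℝ) = 4*(N:ℝ) by push_cast; ring,
      show (4*(n:ℝ)+1)/(4*(N:ℝ)) = (n:ℝ)/N + (1/(N:ℝ))/4 by field_simp,
      show 1/(4*(N:ℝ)) = (1/(N:ℝ))/4 by field_simp]
    exact poleOut1 ((n:ℝ)/N) (1/(N:ℝ)) (by positivity) _ hre1 him1
  have hp2 : northPole q2 ∉ disk q1 := by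
    rw [hd1, diskAt_eq,
      show ((3*n+2 : ℕ):ℝ) = 3*(n:ℝ)+2 by push_cast; ring,
      show ((3*N : ℕ):ℝ) = 3*(N:ℝ) by push_cast; ring,
      show (3*(n:ℝ)+2)/(3*(N:ℝ)) = (n:ℝ)/N + 2*(1/(N:ℝ))/3 by field_simp,
      show 1/(3*(N:ℝ)) = (1/(N:ℝ))/3 by field_simp]
    exact poleOut2 ((n:ℝ)/N) (1/(N:ℝ)) (by positivity) _ hre2 him2
  -- complexity is zero
  have hpc : ∀ α ∈ SB N n, poleComplexity (SB N n) α = 0 := by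
    intro α hα
    unfold poleComplexity
    have hempty : {β ∈ SB N n | β ≠ α ∧ northPole α ∈ disk β} = ∅ := by
      ext β
      simp only [Set.mem_setOf_eq, Set.mem_empty_iff_false, iff_false, not_and]
      intro hβ hβα
      rcases hSB hα with hα1 | hα2
      · rcases hSB hβ with hβ1 | hβ2
        · exact absurd (hβ1.trans hα1.symm) hβα
        · rw [hα1]
          rw [Set.mem_singleton_iff] at hβ2
          rw [hβ2]
          exact hp1
      · rcases hSB hβ with hβ1 | hβ2
        · rw [Set.mem_singleton_iff] at hα2
          rw [hα2, hβ1]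
          exact hp2
        · rw [Set.mem_singleton_iff] at hα2 hβ2
          exact absurd (hβ2.trans hα2.symm) hβα
    rw [hempty]
    exact Set.ncard_empty ℚ
  have himg : poleComplexity (SB N n) '' SB N n ⊆ {0} := by
    rintro x ⟨α, hα, rfl⟩
    simp [hpc α hα]
  unfold cB
  rcases Set.subset_singleton_iff_eq.mp himg with h | h
  · rw [h]
    simpa using csSup_empty
  · rw [h]
    exact csSup_singleton 0

end

end Paper
end

section
/- Let q be a prime, let A = ⌈q²/2⌉, let N>1 and n be integers, and for 1 ≤ j ≤ q−1 define the closed disk D^{(j)} := D( ((Aq+j)n + q)/((Aq+j)N), 1/((Aq+j)N) ) in ℂ. Then: (1) for each 1 ≤ j ≤ q−1 there exists a point z on the boundary circle of D^{(j)} such that z ∉ D^{(l)} for every 1 ≤ l ≤ q−1 with l ≠ j (hence a boundary arc of positive length of D^{(j)} is not covered by the other disks); and (2) the north pole P = ((Aq+q−1)n + q)/((Aq+q−1)N) + i/((Aq+q−1)N) of D^{(q−1)} lies in the open interior of D^{(j)} for every 1 ≤ j ≤ q−2. -/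
/-!
Translating by `n / N`, the disk `D^{(j)}` becomes `D(q r, r)` with `r = 1 / ((Aq + j) N)`.
All disks `D(q r, r)`, `r > 0`, are homothetic from the origin and inscribed in the cone with
apex `0` and half-angle `arcsin (1 / q)`. If `w` is the point where `D(q, 1)` touches the cone,
the power of `r w ∈ ∂D(q r, r)` with respect to `D(q s, s)` is `(q² - 1)(r - s)²`, so no other
disk of the family reaches it.
The north pole `q s + i s` of `D(q s, s)` has power `(s - t)(q² (s - t) + s + t)` with respect to
`D(q t, t)`, which is negative for `s < t` as soon as `q² (t - s) < s + t`; for `s = r_{q-1}`,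
`t = r_j` this reads `q² (q - 1 - j) < 2Aq + j + q - 1`, which `A ≥ q² / 2` guarantees.
-/

namespace Paper

noncomputable section

/-- Center of the disk `D^{(j)}`: the real number `((Aq+j)n + q) / ((Aq+j)N)`,
viewed in `ℂ`. -/
def Dcenter (A q : ℕ) (N n : ℤ) (j : ℕ) : ℂ :=
  (((A * q + j : ℕ) : ℂ) * (n : ℂ) + (q : ℂ)) / (((A * q + j : ℕ) : ℂ) * (N : ℂ))

/-- Radius of the disk `D^{(j)}`: `1 / ((Aq+j)N)`. -/
def Drad (A q : ℕ) (N : ℤ) (j : ℕ) : ℝ :=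
  1 / (((A * q + j : ℕ) : ℝ) * (N : ℝ))

/-- The closed disk `D^{(j)}`. -/
def Dj (A q : ℕ) (N n : ℤ) (j : ℕ) : Set ℂ :=
  Metric.closedBall (Dcenter A q N n j) (Drad A q N j)

end

open Complex Metric

section ConeDisks

variable (c : ℂ) {q : ℝ}

/-- The point where the ray from `0` at angle `arcsin (1 / q)` touches the disk `D(q, 1)`. -/
noncomputable def unitTangencyPoint (q : ℝ) : ℂ :=
  ⟨(q ^ 2 - 1) / q, √(q ^ 2 - 1) / q⟩

theorem dist_tangencyPoint_sq (hq : 1 ≤ q) (r s : ℝ) :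
    dist (c + r * unitTangencyPoint q) (c + ↑(q * s)) ^ 2
      = s ^ 2 + (q ^ 2 - 1) * (r - s) ^ 2 := by
  have hq0 : q ≠ 0 := by positivity
  have hsqrt : √(q ^ 2 - 1) ^ 2 = q ^ 2 - 1 := Real.sq_sqrt (by nlinarith)
  rw [dist_eq, add_sub_add_left_eq_sub, ← normSq_eq_norm_sq, normSq_apply]
  simp only [unitTangencyPoint, sub_re, sub_im, mul_re, mul_im, ofReal_re, ofReal_im]
  field_simp
  linear_combination r ^ 2 * hsqrt

theorem tangencyPoint_mem_sphere (hq : 1 ≤ q) {r : ℝ} (hr : 0 ≤ r) :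
    c + r * unitTangencyPoint q ∈ sphere (c + ↑(q * r)) r := by
  have h := dist_tangencyPoint_sq c hq r r
  rw [sub_self, zero_pow two_ne_zero, mul_zero, add_zero] at h
  exact (pow_left_inj₀ dist_nonneg hr two_ne_zero).mp h

theorem tangencyPoint_notMem_closedBall (hq : 1 < q) {r s : ℝ} (hrs : r ≠ s) :
    c + r * unitTangencyPoint q ∉ closedBall (c + ↑(q * s)) s := by
  have hpow : 0 < (q ^ 2 - 1) * (r - s) ^ 2 := by
    have : 0 < q ^ 2 - 1 := by nlinarith
    have : r - s ≠ 0 := sub_ne_zero.mpr hrs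
    positivity
  have hlt : s ^ 2 < dist (c + r * unitTangencyPoint q) (c + ↑(q * s)) ^ 2 := by
    rw [dist_tangencyPoint_sq c hq.le]
    linarith
  rw [mem_closedBall, not_le]
  exact (le_abs_self s).trans_lt (abs_lt_of_sq_lt_sq hlt dist_nonneg)

variable (q) in
theorem dist_northPole_sq (s t : ℝ) :
    dist (c + ↑(q * s) + I * ↑s) (c + ↑(q * t)) ^ 2
      = t ^ 2 + (s - t) * (q ^ 2 * (s - t) + s + t) := by
  rw [dist_eq, ← normSq_eq_norm_sq, normSq_apply]
  simp only [add_re, add_im, sub_re, sub_im, mul_re, mul_im, I_re, I_im, ofReal_re, ofReal_im]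
  ring

theorem northPole_mem_ball {s t : ℝ} (hst : s < t) (h : q ^ 2 * (t - s) < s + t) :
    c + ↑(q * s) + I * ↑s ∈ ball (c + ↑(q * t)) t := by
  have ht : 0 < t := by nlinarith [sq_nonneg q]
  have hlt : dist (c + ↑(q * s) + I * ↑s) (c + ↑(q * t)) ^ 2 < t ^ 2 := by
    rw [dist_northPole_sq]
    nlinarith
  rw [mem_ball, ← abs_of_nonneg dist_nonneg]
  exact abs_lt_of_sq_lt_sq hlt ht.le

end ConeDisks

section Radii

variable {A q : ℕ} {N : ℤ}

theorem Dcenter_eq (n : ℤ) {j : ℕ} (hj : A * q + j ≠ 0) :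
    Dcenter A q N n j = (n : ℂ) / N + ↑((q : ℝ) * Drad A q N j) := by
  have ha : ((A * q + j : ℕ) : ℂ) ≠ 0 := by exact_mod_cast hj
  rw [Dcenter, Drad, add_div, mul_div_mul_left _ _ ha]
  push_cast
  ring

theorem Drad_nonneg (hN : 0 ≤ N) (j : ℕ) : 0 ≤ Drad A q N j := by
  unfold Drad
  have : (0 : ℝ) ≤ N := by exact_mod_cast hN
  positivity

theorem Drad_injective (hN : N ≠ 0) : Function.Injective (Drad A q N) := by
  intro j l h
  have hN' : (N : ℝ) ≠ 0 := by exact_mod_cast hN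
  simp only [Drad, one_div, inv_inj, mul_left_inj' hN', Nat.cast_inj] at h
  omega

theorem Drad_lt_Drad (hN : 0 < N) {j l : ℕ} (hj : A * q + j ≠ 0) (hjl : j < l) :
    Drad A q N l < Drad A q N j := by
  have hN' : (0 : ℝ) < N := by exact_mod_cast hN
  have ha : (0 : ℝ) < ((A * q + j : ℕ) : ℝ) := by exact_mod_cast Nat.pos_of_ne_zero hj
  have hab : ((A * q + j : ℕ) : ℝ) < ((A * q + l : ℕ) : ℝ) := by exact_mod_cast by omega
  unfold Drad
  gcongr

end Radii

theorem sq_le_two_mul_ceil (q : ℕ) : q ^ 2 ≤ 2 * ⌈(q : ℚ) ^ 2 / 2⌉₊ := by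
  have h := Nat.le_ceil ((q : ℚ) ^ 2 / 2)
  have : ((q ^ 2 : ℕ) : ℚ) ≤ ((2 * ⌈(q : ℚ) ^ 2 / 2⌉₊ : ℕ) : ℚ) := by
    push_cast; linarith
  exact_mod_cast this

theorem sq_mul_sub_one_div_lt {q a b N : ℝ} (ha : 0 < a) (hb : 0 < b) (hN : 0 < N)
    (h : q ^ 2 * (b - a) < a + b) :
    q ^ 2 * (1 / (a * N) - 1 / (b * N)) < 1 / (b * N) + 1 / (a * N) := by
  have hdiff : 1 / (a * N) - 1 / (b * N) = (b - a) / (a * b * N) := by field_simp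
  have hsum : 1 / (b * N) + 1 / (a * N) = (a + b) / (a * b * N) := by field_simp
  rw [hdiff, hsum, mul_div_assoc']
  exact div_lt_div_of_pos_right h (by positivity)

theorem sq_mul_sub_lt_add_of_sq_le_two_mul {q A j : ℕ} (hA : q ^ 2 ≤ 2 * A) (hj : 1 ≤ j)
    (hjq : j + 2 ≤ q) :
    (q : ℝ) ^ 2 * ((A * q + (q - 1 : ℕ)) - (A * q + j))
      < (A * q + j) + (A * q + (q - 1 : ℕ)) := by
  have hA' : (q : ℝ) ^ 2 ≤ 2 * A := by exact_mod_cast hA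
  have hj' : (1 : ℝ) ≤ j := by exact_mod_cast hj
  have hjq' : (j : ℝ) + 2 ≤ q := by exact_mod_cast hjq
  rw [Nat.cast_sub (by omega), Nat.cast_one]
  nlinarith [mul_le_mul_of_nonneg_right hA' (Nat.cast_nonneg (α := ℝ) q), sq_nonneg (q : ℝ)]

theorem family_of_disks_general (q : ℕ) (A : ℕ) (hA : A = ⌈(q : ℚ) ^ 2 / 2⌉₊)
    (N n : ℤ) (hN : 1 < N) :
    (∀ j, 1 ≤ j → j ≤ q - 1 →
      ∃ z ∈ Metric.sphere (Dcenter A q N n j) (Drad A q N j),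
        ∀ l, 1 ≤ l → l ≤ q - 1 → l ≠ j → z ∉ Dj A q N n l) ∧
    (∀ j, 1 ≤ j → j ≤ q - 2 →
      Dcenter A q N n (q - 1) + Complex.I * ((Drad A q N (q - 1) : ℝ) : ℂ) ∈
        Metric.ball (Dcenter A q N n j) (Drad A q N j)) := by
  have hN0 : 0 < N := zero_lt_one.trans hN
  refine ⟨fun j hj hjq => ?_, fun j hj hjq => ?_⟩
  · have hq : (1 : ℝ) < q := by exact_mod_cast (show 1 < q by omega)
    refine ⟨(n : ℂ) / N + Drad A q N j * unitTangencyPoint q, ?_, fun l _ _ hlj => ?_⟩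
    · rw [Dcenter_eq n (by omega)]
      exact tangencyPoint_mem_sphere _ hq.le (Drad_nonneg hN0.le j)
    · rw [Dj, Dcenter_eq n (by omega)]
      exact tangencyPoint_notMem_closedBall _ hq ((Drad_injective hN0.ne').ne hlj.symm)
  · rw [Dcenter_eq n (by omega), Dcenter_eq n (by omega)]
    apply northPole_mem_ball
    · exact Drad_lt_Drad hN0 (by omega) (by omega)
    · unfold Drad
      apply sq_mul_sub_one_div_lt (by exact_mod_cast (show 0 < A * q + j by omega))
        (by exact_mod_cast (show 0 < A * q + (q - 1) by omega)) (by exact_mod_cast hN0)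
      push_cast
      exact sq_mul_sub_lt_add_of_sq_le_two_mul (hA ▸ sq_le_two_mul_ceil q) hj (by omega)

/-- With `A = ⌈q²/2⌉`: (1) each disk `D^{(j)}`, `1 ≤ j ≤ q-1`, has a boundary point
not covered by any other `D^{(l)}`; (2) the north pole of `D^{(q-1)}` lies in the
open interior of `D^{(j)}` for every `1 ≤ j ≤ q-2`. -/
theorem family_of_disks (q : ℕ) (hq : q.Prime) (A : ℕ) (hA : A = ⌈(q : ℚ) ^ 2 / 2⌉₊)
    (N n : ℤ) (hN : 1 < N) :
    (∀ j, 1 ≤ j → j ≤ q - 1 →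
      ∃ z ∈ Metric.sphere (Dcenter A q N n j) (Drad A q N j),
        ∀ l, 1 ≤ l → l ≤ q - 1 → l ≠ j → z ∉ Dj A q N n l) ∧
    (∀ j, 1 ≤ j → j ≤ q - 2 →
      Dcenter A q N n (q - 1) + Complex.I * ((Drad A q N (q - 1) : ℝ) : ℂ) ∈
        Metric.ball (Dcenter A q N n j) (Drad A q N j)) :=
  family_of_disks_general q A hA N n hN

end Paper
end
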